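/- arXiv:2306.12593 — 6 statements merged into one kernel-verified Lean document; each statement's English description precedes it below -/
import Mathlib

section
/- For every dimension d ≥ 1, every SLKKM coloring χ : [0,1]^d → C, and every ε > 0, there exists a point p ∈ [0,1]^d such that the open ℓ∞ ball of radius ε centered at p contains points of at least ⌈(1 + ε/(1+ε))^d⌉ different colors, i.e. the set {c ∈ C : χ⁻¹(c) ∩ B°_∞(ε, p) ≠ ∅} has cardinality at least ⌈(1 + ε/(1+ε))^d⌉. -/
/-!
Put `r = ε / (1 + ε)` and `Q = [0,1]^d`. Unless some `ε`-ball already meets infinitely many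
colours, compactness leaves finitely many colour classes `A i`, and one shows by induction on `d`
that `∑ i, |thickening ε (A i) ∩ Q| ≥ (1 + r)^d`. If every `ε`-ball around a point of `Q` met at
most `⌈(1 + r)^d⌉ - 1` classes, this sum would be at most `⌈(1 + r)^d⌉ - 1 < (1 + r)^d`.

For the induction step write points as `(t, y)` with `t ∈ [0,1]`. Thickening each class by
`ε - r` in `t` and by `ε` in `y` gives sets whose slices over each `t` contain the `ε`-thickenings
of the slices of the classes, so by Fubini their total volume `T` is at least `(1 + r)^(d-1)`.
Over a fixed `y` such a set is `X = thickening (ε - r) S` for some `S ⊆ [0,1]`, while the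
`ε`-thickening of the class is `thickening ε S`. If `0 ∈ S`, the homothety of ratio `1 - r`
centred at `1` maps `X ∩ [0,1]` into `thickening ε S ∩ [r,1]`, and `[0,r)` lies in
`thickening ε {0}`, so `(1 - r)|X ∩ [0,1]| + r ≤ |thickening ε S ∩ [0,1]|`; symmetrically if
`1 ∈ S`. Now `0 ∈ S` whenever `y` is `ε`-close to the slice of the class at `t = 0`, similarly
for `t = 1`, and never both, as a class has no two points at distance `1`. Integrating over `y`
and summing over the classes gives `(1 - r) T + 2 r (1 + r)^(d-1) ≤ ∑ i, |thickening ε (A i) ∩ Q|`.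
-/

open MeasureTheory Set Metric Topology
open scoped ENNReal

lemma IsCompact.finite_image_of_forall_finite_nhdsWithin {X α : Type*} [TopologicalSpace X]
    {K : Set X} (hK : IsCompact K) {f : X → α} (h : ∀ x ∈ K, ∃ U ∈ 𝓝[K] x, (f '' U).Finite) :
    (f '' K).Finite :=
  hK.induction_on (by simp) (fun _ _ hst ht => ht.subset (image_mono hst))
    (fun _ _ hs ht => by simpa only [image_union] using hs.union ht) h

lemma MeasureTheory.tsum_measure_le_mul_measure_iUnion {α ι : Type*} [MeasurableSpace α]
    {μ : Measure α} {s : ι → Set α} (hs : ∀ i, MeasurableSet (s i)) {M : ℕ}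
    (h : ∀ x, {i | x ∈ s i}.encard ≤ M) : ∑' i, μ (s i) ≤ M * μ (⋃ i, s i) := by
  simpa [Measure.sum_apply _ MeasurableSet.univ] using
    Measure.le_iff'.1 (Measure.sum_restrict_le (μ := μ) hs h) univ

lemma MeasureTheory.Measure.mul_le_tsum_prod_of_le_tsum_slices {α β ι : Type*}
    [MeasurableSpace α] [MeasurableSpace β] [Countable ι] {μ : Measure α} {ν : Measure β}
    [SFinite ν] {B : ι → Set (α × β)} (hB : ∀ i, MeasurableSet (B i)) {s : Set α} {c : ℝ≥0∞}
    (h : ∀ t ∈ s, c ≤ ∑' i, ν (Prod.mk t ⁻¹' B i)) : c * μ s ≤ ∑' i, μ.prod ν (B i) :=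
  calc c * μ s = ∫⁻ _ in s, c ∂μ := (setLIntegral_const s c).symm
    _ ≤ ∫⁻ t in s, ∑' i, ν (Prod.mk t ⁻¹' B i) ∂μ :=
        setLIntegral_mono (.tsum fun i => measurable_measure_prodMk_left (hB i)) h
    _ ≤ ∫⁻ t, ∑' i, ν (Prod.mk t ⁻¹' B i) ∂μ := setLIntegral_le_lintegral _ _
    _ = ∑' i, μ.prod ν (B i) := by
        rw [lintegral_tsum fun i => (measurable_measure_prodMk_left (hB i)).aemeasurable]
        simp_rw [Measure.prod_apply (hB _)]

lemma IsometryEquiv.preimage_thickening {X Y : Type*} [PseudoMetricSpace X] [PseudoMetricSpace Y]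
    (g : X ≃ᵢ Y) (δ : ℝ) (A : Set Y) : g ⁻¹' thickening δ A = thickening δ (g ⁻¹' A) := by
  ext x
  simp only [mem_preimage, mem_thickening_iff]
  constructor
  · rintro ⟨z, hz, hxz⟩
    exact ⟨g.symm z, by simpa using hz, by rwa [← g.dist_eq, g.apply_symm_apply]⟩
  · rintro ⟨z, hz, hxz⟩
    exact ⟨g z, hz, by rwa [g.dist_eq]⟩

def boxThickening {α β : Type*} [PseudoMetricSpace α] [PseudoMetricSpace β] (δ ε : ℝ)
    (A : Set (α × β)) : Set (α × β) :=
  ⋃ x ∈ A, ball x.1 δ ×ˢ ball x.2 ε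

section boxThickening
variable {α β : Type*} [PseudoMetricSpace α] [PseudoMetricSpace β] {δ ε : ℝ} {A : Set (α × β)}

lemma isOpen_boxThickening : IsOpen (boxThickening δ ε A) :=
  isOpen_biUnion fun _ _ => isOpen_ball.prod isOpen_ball

lemma thickening_eq_boxThickening : thickening ε A = boxThickening ε ε A := by
  simp only [thickening_eq_biUnion_ball, boxThickening, ball_prod_same]

lemma preimage_mk_boxThickening (y : β) :
    (fun t => (t, y)) ⁻¹' boxThickening δ ε A =
      thickening δ (Prod.fst '' (A ∩ Prod.snd ⁻¹' ball y ε)) := by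
  ext t
  simp only [boxThickening, mem_preimage, mem_iUnion, mem_prod, mem_ball, mem_thickening_iff,
    mem_image, mem_inter_iff, exists_prop, Prod.exists]
  grind [dist_comm]

lemma mk_mem_boxThickening_of_mem_thickening (hδ : 0 < δ) {t : α} {y : β}
    (hy : y ∈ thickening ε (Prod.mk t ⁻¹' A)) : (t, y) ∈ boxThickening δ ε A := by
  obtain ⟨z, hz, hyz⟩ := mem_thickening_iff.1 hy
  exact mem_biUnion hz ⟨mem_ball_self hδ, hyz⟩

end boxThickening

section UnitInterval
variable {S : Set ℝ} {r ε : ℝ}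

lemma mapsTo_homothety_thickening_sub {c : ℝ} (hc : c ∈ Icc (0 : ℝ) 1) (hr0 : 0 ≤ r)
    (hr1 : r ≤ 1) :
    MapsTo (AffineMap.homothety c (1 - r)) (thickening (ε - r) S ∩ Icc 0 1)
      (thickening ε S ∩ Icc 0 1) := by
  rintro t ⟨ht, ht0, ht1⟩
  obtain ⟨s, hs, hts⟩ := mem_thickening_iff.1 ht
  rw [Real.dist_eq, abs_lt] at hts
  obtain ⟨hc0, hc1⟩ := hc
  simp only [AffineMap.homothety_apply, vsub_eq_sub, smul_eq_mul, vadd_eq_add]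
  -- the homothety moves each `t ∈ [0, 1]` by `r * (c - t)`, which has size at most `r`
  refine ⟨mem_thickening_iff.2 ⟨s, hs, ?_⟩, ?_, ?_⟩
  · rw [Real.dist_eq, abs_lt]
    constructor <;> nlinarith [mul_nonneg hr0 hc0, mul_nonneg hr0 ht0,
      mul_nonneg hr0 (sub_nonneg.2 hc1), mul_nonneg hr0 (sub_nonneg.2 ht1)]
  · nlinarith [mul_nonneg hr0 hc0, mul_nonneg (sub_nonneg.2 hr1) ht0]
  · nlinarith [mul_nonneg hr0 (sub_nonneg.2 hc1), mul_nonneg (sub_nonneg.2 hr1) (sub_nonneg.2 ht1)]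

lemma ofReal_mul_volume_thickening_sub_add_le {c : ℝ} {J : Set ℝ} (hc : c ∈ Icc (0 : ℝ) 1)
    (hr0 : 0 ≤ r) (hr1 : r ≤ 1) (hJ : J ⊆ thickening ε S ∩ Icc 0 1) (hJm : MeasurableSet J)
    (hJdisj : Disjoint (AffineMap.homothety c (1 - r) '' Icc 0 1) J) :
    ENNReal.ofReal (1 - r) * volume (thickening (ε - r) S ∩ Icc 0 1) + volume J ≤
      volume (thickening ε S ∩ Icc 0 1) := by
  set h := AffineMap.homothety c (1 - r)
  calc ENNReal.ofReal (1 - r) * volume (thickening (ε - r) S ∩ Icc 0 1) + volume J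
      = volume (h '' (thickening (ε - r) S ∩ Icc 0 1)) + volume J := by
        rw [Measure.addHaar_image_homothety, Module.finrank_self, pow_one,
          abs_of_nonneg (sub_nonneg.2 hr1)]
    _ = volume (h '' (thickening (ε - r) S ∩ Icc 0 1) ∪ J) :=
        (measure_union (hJdisj.mono_left (image_mono inter_subset_right)) hJm).symm
    _ ≤ volume (thickening ε S ∩ Icc 0 1) :=
        measure_mono (union_subset (mapsTo_homothety_thickening_sub hc hr0 hr1).image_subset hJ)

lemma ofReal_mul_volume_thickening_sub_add_le_of_zero_mem (hr0 : 0 ≤ r) (hr1 : r ≤ 1)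
    (hrε : r ≤ ε) (hS : 0 ∈ S) :
    ENNReal.ofReal (1 - r) * volume (thickening (ε - r) S ∩ Icc 0 1) + ENNReal.ofReal r ≤
      volume (thickening ε S ∩ Icc 0 1) := by
  have hJ : Ico 0 r ⊆ thickening ε S ∩ Icc 0 1 := fun t ⟨ht0, htr⟩ =>
    ⟨mem_thickening_iff.2 ⟨0, hS, by rw [Real.dist_eq, abs_lt]; constructor <;> linarith⟩,
      ht0, by linarith⟩
  have hdisj : Disjoint (AffineMap.homothety 1 (1 - r) '' Icc 0 1) (Ico 0 r) := by
    rw [disjoint_left]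
    rintro _ ⟨t, ⟨ht0, -⟩, rfl⟩ ⟨-, hlt⟩
    simp only [AffineMap.homothety_apply, vsub_eq_sub, smul_eq_mul, vadd_eq_add] at hlt
    nlinarith [mul_nonneg (sub_nonneg.2 hr1) ht0]
  simpa [Real.volume_Ico] using
    ofReal_mul_volume_thickening_sub_add_le ⟨zero_le_one, le_rfl⟩ hr0 hr1 hJ measurableSet_Ico hdisj

lemma ofReal_mul_volume_thickening_sub_add_le_of_one_mem (hr0 : 0 ≤ r) (hr1 : r ≤ 1)
    (hrε : r ≤ ε) (hS : 1 ∈ S) :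
    ENNReal.ofReal (1 - r) * volume (thickening (ε - r) S ∩ Icc 0 1) + ENNReal.ofReal r ≤
      volume (thickening ε S ∩ Icc 0 1) := by
  have hJ : Ioc (1 - r) 1 ⊆ thickening ε S ∩ Icc 0 1 := fun t ⟨htr, ht1⟩ =>
    ⟨mem_thickening_iff.2 ⟨1, hS, by rw [Real.dist_eq, abs_lt]; constructor <;> linarith⟩,
      by linarith, ht1⟩
  have hdisj : Disjoint (AffineMap.homothety 0 (1 - r) '' Icc 0 1) (Ioc (1 - r) 1) := by
    rw [disjoint_left]
    rintro _ ⟨t, ⟨-, ht1⟩, rfl⟩ ⟨hlt, -⟩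
    simp only [AffineMap.homothety_apply, vsub_eq_sub, smul_eq_mul, vadd_eq_add] at hlt
    nlinarith [mul_nonneg (sub_nonneg.2 hr1) (sub_nonneg.2 ht1)]
  simpa [Real.volume_Ioc] using
    ofReal_mul_volume_thickening_sub_add_le ⟨le_rfl, zero_le_one⟩ hr0 hr1 hJ measurableSet_Ioc hdisj

end UnitInterval

structure IsSLKKMCover {X ι : Type*} [PseudoMetricSpace X] (K : Set X) (A : ι → Set X) : Prop where
  subset : ∀ i, A i ⊆ K
  subset_iUnion : K ⊆ ⋃ i, A i
  dist_ne_one : ∀ i, ∀ x ∈ A i, ∀ y ∈ A i, dist x y ≠ 1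

namespace IsSLKKMCover
variable {ι : Type*}

lemma preimage {X Y : Type*} [PseudoMetricSpace X] [PseudoMetricSpace Y] {K : Set X}
    {A : ι → Set X} (hA : IsSLKKMCover K A) {g : Y → X} (hg : Isometry g) :
    IsSLKKMCover (g ⁻¹' K) fun i => g ⁻¹' A i where
  subset i := preimage_mono (hA.subset i)
  subset_iUnion := by simpa only [preimage_iUnion] using preimage_mono hA.subset_iUnion
  dist_ne_one i x hx y hy := by simpa only [hg.dist_eq] using hA.dist_ne_one i _ hx _ hy

lemma slice {E : Type*} [PseudoMetricSpace E] {K : Set E} {A : ι → Set (ℝ × E)}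
    (hA : IsSLKKMCover (Icc 0 1 ×ˢ K) A) {t : ℝ} (ht : t ∈ Icc (0 : ℝ) 1) :
    IsSLKKMCover K fun i => Prod.mk t ⁻¹' A i where
  subset i := by
    simpa only [mk_preimage_prod_right ht] using preimage_mono (f := Prod.mk t) (hA.subset i)
  subset_iUnion := by
    simpa only [preimage_iUnion, mk_preimage_prod_right ht] using
      preimage_mono (f := Prod.mk t) hA.subset_iUnion
  dist_ne_one i y hy z hz := by simpa only [dist_prod_same_left] using hA.dist_ne_one i _ hy _ hz

end IsSLKKMCover

section ProductStep
variable {E : Type*} [PseudoMetricSpace E] {K : Set E} {A : Set (ℝ × E)} {r ε : ℝ}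

lemma ofReal_mul_volume_fiber_boxThickening_add_indicator_le (hAK : A ⊆ Icc 0 1 ×ˢ K)
    (hK : ∀ a ∈ K, ∀ b ∈ K, dist a b ≤ 1) (hA : ∀ x ∈ A, ∀ y ∈ A, dist x y ≠ 1) (hr0 : 0 ≤ r)
    (hr1 : r ≤ 1) (hrε : r ≤ ε) (y : E) :
    ENNReal.ofReal (1 - r) *
          volume ((fun t => (t, y)) ⁻¹' (boxThickening (ε - r) ε A ∩ Icc 0 1 ×ˢ K))
        + (thickening ε (Prod.mk 0 ⁻¹' A) ∩ K).indicator (fun _ => ENNReal.ofReal r) y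
        + (thickening ε (Prod.mk 1 ⁻¹' A) ∩ K).indicator (fun _ => ENNReal.ofReal r) y ≤
      volume ((fun t => (t, y)) ⁻¹' (thickening ε A ∩ Icc 0 1 ×ˢ K)) := by
  by_cases hy : y ∈ K
  swap
  · simp [hy, mk_preimage_prod_left_eq_empty]
  simp only [preimage_inter, mk_preimage_prod_left hy, thickening_eq_boxThickening (A := A),
    preimage_mk_boxThickening]
  set S := Prod.fst '' (A ∩ Prod.snd ⁻¹' ball y ε)
  have hS : ∀ t, y ∈ thickening ε (Prod.mk t ⁻¹' A) → t ∈ S := fun t hyt => by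
    obtain ⟨z, hz, hyz⟩ := mem_thickening_iff.1 hyt
    exact ⟨(t, z), ⟨hz, mem_ball'.2 hyz⟩, rfl⟩
  have hS01 : 0 ∈ S → 1 ∉ S := by
    rintro ⟨x, ⟨hx, -⟩, hx0⟩ ⟨x', ⟨hx', -⟩, hx1⟩
    refine hA x hx x' hx' ?_
    rw [Prod.dist_eq, Real.dist_eq, hx0, hx1]
    norm_num
    exact hK _ (hAK hx).2 _ (hAK hx').2
  by_cases h0 : y ∈ thickening ε (Prod.mk 0 ⁻¹' A)
  · have h1 : y ∉ thickening ε (Prod.mk 1 ⁻¹' A) := fun h1 => hS01 (hS 0 h0) (hS 1 h1)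
    simpa [indicator_of_mem, h0, h1, hy] using
      ofReal_mul_volume_thickening_sub_add_le_of_zero_mem hr0 hr1 hrε (hS 0 h0)
  by_cases h1 : y ∈ thickening ε (Prod.mk 1 ⁻¹' A)
  · simpa [indicator_of_mem, h0, h1, hy] using
      ofReal_mul_volume_thickening_sub_add_le_of_one_mem hr0 hr1 hrε (hS 1 h1)
  rw [indicator_of_notMem (fun h : y ∈ _ ∩ K => h0 h.1),
    indicator_of_notMem (fun h : y ∈ _ ∩ K => h1 h.1), add_zero, add_zero]
  calc ENNReal.ofReal (1 - r) * volume (thickening (ε - r) S ∩ Icc 0 1)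
      ≤ volume (thickening (ε - r) S ∩ Icc 0 1) :=
        mul_le_of_le_one_left zero_le (ENNReal.ofReal_le_one.2 (by linarith))
    _ ≤ volume (thickening ε S ∩ Icc 0 1) :=
        measure_mono (inter_subset_inter_left _ (thickening_mono (by linarith) _))

variable [MeasureSpace E] [OpensMeasurableSpace E] [SFinite (volume : Measure E)]

lemma ofReal_mul_volume_boxThickening_add_le (hKm : MeasurableSet K) (hAK : A ⊆ Icc 0 1 ×ˢ K)
    (hK : ∀ a ∈ K, ∀ b ∈ K, dist a b ≤ 1) (hA : ∀ x ∈ A, ∀ y ∈ A, dist x y ≠ 1) (hr0 : 0 ≤ r)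
    (hr1 : r ≤ 1) (hrε : r ≤ ε) :
    ENNReal.ofReal (1 - r) * volume (boxThickening (ε - r) ε A ∩ Icc 0 1 ×ˢ K)
        + ENNReal.ofReal r * volume (thickening ε (Prod.mk 0 ⁻¹' A) ∩ K)
        + ENNReal.ofReal r * volume (thickening ε (Prod.mk 1 ⁻¹' A) ∩ K) ≤
      volume (thickening ε A ∩ Icc 0 1 ×ˢ K) := by
  have hQ : ∀ {U : Set (ℝ × E)}, IsOpen U → MeasurableSet (U ∩ Icc 0 1 ×ˢ K) :=
    fun hU => hU.measurableSet.inter (measurableSet_Icc.prod hKm)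
  have hG : ∀ t : ℝ, MeasurableSet (thickening ε (Prod.mk t ⁻¹' A) ∩ K) :=
    fun _ => isOpen_thickening.measurableSet.inter hKm
  rw [Measure.volume_eq_prod, Measure.prod_apply_symm (hQ isOpen_boxThickening),
    Measure.prod_apply_symm (hQ isOpen_thickening),
    ← lintegral_const_mul' _ _ ENNReal.ofReal_ne_top, ← lintegral_indicator_const (hG 0),
    ← lintegral_indicator_const (hG 1)]
  refine (add_le_add_left (le_lintegral_add _ _) _).trans ((le_lintegral_add _ _).trans ?_)
  exact lintegral_mono fun y =>
    ofReal_mul_volume_fiber_boxThickening_add_indicator_le hAK hK hA hr0 hr1 hrε y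

theorem IsSLKKMCover.ofReal_one_add_mul_le_tsum_volume_prod {ι : Type*} [Countable ι]
    (hKm : MeasurableSet K) (hK : ∀ a ∈ K, ∀ b ∈ K, dist a b ≤ 1) {A : ι → Set (ℝ × E)}
    (hA : IsSLKKMCover (Icc 0 1 ×ˢ K) A) (hr0 : 0 ≤ r) (hr1 : r ≤ 1) (hrε : r < ε)
    {β : ℝ≥0∞}
    (hβ : ∀ t ∈ Icc (0 : ℝ) 1, β ≤ ∑' i, volume (thickening ε (Prod.mk t ⁻¹' A i) ∩ K)) :
    ENNReal.ofReal (1 + r) * β ≤ ∑' i, volume (thickening ε (A i) ∩ Icc 0 1 ×ˢ K) := by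
  have hslice : ∀ t ∈ Icc (0 : ℝ) 1,
      β ≤ ∑' i, volume (Prod.mk t ⁻¹' (boxThickening (ε - r) ε (A i) ∩ Icc 0 1 ×ˢ K)) :=
    fun t ht => (hβ t ht).trans <| ENNReal.tsum_le_tsum fun _ => measure_mono fun _ ⟨hy, hyK⟩ =>
      ⟨mk_mem_boxThickening_of_mem_thickening (sub_pos.2 hrε) hy, ht, hyK⟩
  have hT : β ≤ ∑' i, volume (boxThickening (ε - r) ε (A i) ∩ Icc 0 1 ×ˢ K) := by
    simpa [Real.volume_Icc, Measure.volume_eq_prod] using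
      Measure.mul_le_tsum_prod_of_le_tsum_slices (μ := volume)
        (fun _ => isOpen_boxThickening.measurableSet.inter (measurableSet_Icc.prod hKm)) hslice
  calc ENNReal.ofReal (1 + r) * β
      = ENNReal.ofReal (1 - r) * β + ENNReal.ofReal r * β + ENNReal.ofReal r * β := by
        rw [← add_mul, ← add_mul, ← ENNReal.ofReal_add (by linarith) hr0,
          ← ENNReal.ofReal_add (by linarith) hr0]
        ring_nf
    _ ≤ ENNReal.ofReal (1 - r) * ∑' i, volume (boxThickening (ε - r) ε (A i) ∩ Icc 0 1 ×ˢ K)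
        + ENNReal.ofReal r * ∑' i, volume (thickening ε (Prod.mk 0 ⁻¹' A i) ∩ K)
        + ENNReal.ofReal r * ∑' i, volume (thickening ε (Prod.mk 1 ⁻¹' A i) ∩ K) := by
        gcongr <;> first | exact hT | exact hβ 0 (by simp) | exact hβ 1 (by simp)
    _ ≤ ∑' i, volume (thickening ε (A i) ∩ Icc 0 1 ×ˢ K) := by
        rw [← ENNReal.tsum_mul_left, ← ENNReal.tsum_mul_left, ← ENNReal.tsum_mul_left,
          ← ENNReal.tsum_add, ← ENNReal.tsum_add]
        exact ENNReal.tsum_le_tsum fun i => ofReal_mul_volume_boxThickening_add_le hKm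
          (hA.subset i) hK (hA.dist_ne_one i) hr0 hr1 hrε.le

end ProductStep

section Cube
variable {ι : Type*} [Countable ι] {r ε : ℝ}

lemma dist_le_one_of_mem_Icc {n : ℕ} {a b : Fin n → ℝ} (ha : a ∈ Icc 0 1) (hb : b ∈ Icc 0 1) :
    dist a b ≤ 1 :=
  (Real.dist_le_of_mem_pi_Icc ha hb).trans <| (dist_pi_le_iff zero_le_one).2 fun _ => by simp

def consIsometryEquiv (n : ℕ) : ℝ × (Fin n → ℝ) ≃ᵢ (Fin (n + 1) → ℝ) where
  toEquiv := Fin.insertNthEquiv (fun _ => ℝ) 0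
  isometry_toFun := Isometry.of_dist_eq fun x y =>
    (Fin.dist_insertNth_insertNth (α := fun _ => ℝ) 0 x.1 y.1 x.2 y.2).trans Prod.dist_eq.symm

lemma measurePreserving_consIsometryEquiv (n : ℕ) :
    MeasurePreserving (consIsometryEquiv n) volume volume :=
  (volume_preserving_piFinSuccAbove (fun _ : Fin (n + 1) => ℝ) 0).symm _

lemma consIsometryEquiv_preimage_Icc (n : ℕ) :
    consIsometryEquiv n ⁻¹' Icc 0 1 = Icc 0 1 ×ˢ Icc 0 1 := by
  ext ⟨t, y⟩
  exact Fin.insertNth_mem_Icc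

theorem IsSLKKMCover.ofReal_one_add_pow_le_tsum_volume {n : ℕ} {A : ι → Set (Fin n → ℝ)}
    (hA : IsSLKKMCover (Icc 0 1) A) (hr0 : 0 ≤ r) (hr1 : r ≤ 1) (hrε : r < ε) :
    ENNReal.ofReal ((1 + r) ^ n) ≤ ∑' i, volume (thickening ε (A i) ∩ Icc 0 1) := by
  induction n with
  | zero =>
    obtain ⟨i, hi⟩ := mem_iUnion.1 (hA.subset_iUnion ⟨le_rfl, zero_le_one⟩)
    calc ENNReal.ofReal ((1 + r) ^ 0) = volume (Icc (0 : Fin 0 → ℝ) 1) := by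
          simp [Real.volume_Icc_pi]
      _ ≤ volume (thickening ε (A i) ∩ Icc 0 1) := measure_mono fun p hp =>
          ⟨mem_thickening_iff.2 ⟨0, hi, by simp [Subsingleton.elim p 0]; linarith⟩, hp⟩
      _ ≤ ∑' i, volume (thickening ε (A i) ∩ Icc 0 1) := ENNReal.le_tsum i
  | succ n ih =>
    set g := consIsometryEquiv n
    have hA' : IsSLKKMCover (Icc 0 1 ×ˢ Icc 0 1) fun i => g ⁻¹' A i := by
      simpa only [g, consIsometryEquiv_preimage_Icc] using hA.preimage g.isometry
    have hvol : ∀ i, volume (thickening ε (g ⁻¹' A i) ∩ Icc 0 1 ×ˢ Icc 0 1) =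
        volume (thickening ε (A i) ∩ Icc 0 1) := fun i => by
      rw [← consIsometryEquiv_preimage_Icc, ← g.preimage_thickening, ← preimage_inter,
        (measurePreserving_consIsometryEquiv n).measure_preimage
          (isOpen_thickening.measurableSet.inter measurableSet_Icc).nullMeasurableSet]
    calc ENNReal.ofReal ((1 + r) ^ (n + 1))
        = ENNReal.ofReal (1 + r) * ENNReal.ofReal ((1 + r) ^ n) := by
          rw [pow_succ', ENNReal.ofReal_mul (by linarith)]
      _ ≤ ∑' i, volume (thickening ε (g ⁻¹' A i) ∩ Icc 0 1 ×ˢ Icc 0 1) :=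
          hA'.ofReal_one_add_mul_le_tsum_volume_prod measurableSet_Icc
            (fun _ ha _ hb => dist_le_one_of_mem_Icc ha hb) hr0 hr1 hrε
            fun _ ht => ih (hA'.slice ht)
      _ = ∑' i, volume (thickening ε (A i) ∩ Icc 0 1) := tsum_congr hvol

theorem IsSLKKMCover.exists_le_encard {n : ℕ} {A : ι → Set (Fin n → ℝ)}
    (hA : IsSLKKMCover (Icc 0 1) A) (hr0 : 0 ≤ r) (hr1 : r ≤ 1) (hrε : r < ε) :
    ∃ p ∈ Icc (0 : Fin n → ℝ) 1,
      (⌈(1 + r) ^ n⌉₊ : ℕ∞) ≤ {i | p ∈ thickening ε (A i)}.encard := by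
  by_contra! h
  set N := ⌈(1 + r) ^ n⌉₊
  have hM : ∀ p, {i | p ∈ thickening ε (A i) ∩ Icc 0 1}.encard ≤ (N - 1 : ℕ) := by
    intro p
    by_cases hp : p ∈ Icc 0 1
    · simpa [hp, ENat.natCast_sub] using ENat.le_sub_one_of_lt (h p hp)
    · simp [hp]
  have hcube : volume (⋃ i, thickening ε (A i) ∩ Icc 0 1) ≤ 1 :=
    (measure_mono (iUnion_subset fun _ => inter_subset_right)).trans (by simp [Real.volume_Icc_pi])
  have hle : ENNReal.ofReal ((1 + r) ^ n) ≤ (N - 1 : ℕ) :=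
    calc ENNReal.ofReal ((1 + r) ^ n) ≤ ∑' i, volume (thickening ε (A i) ∩ Icc 0 1) :=
          hA.ofReal_one_add_pow_le_tsum_volume hr0 hr1 hrε
      _ ≤ (N - 1 : ℕ) * volume (⋃ i, thickening ε (A i) ∩ Icc 0 1) :=
          tsum_measure_le_mul_measure_iUnion
            (fun _ => isOpen_thickening.measurableSet.inter measurableSet_Icc) hM
      _ ≤ (N - 1 : ℕ) := mul_le_of_le_one_right zero_le hcube
  have hN : 1 ≤ N := Nat.one_le_ceil_iff.2 (by positivity)
  have : N ≤ N - 1 := Nat.ceil_le.2 <| by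
    rwa [← ENNReal.ofReal_natCast, ENNReal.ofReal_le_ofReal_iff (Nat.cast_nonneg _)] at hle
  omega

end Cube

lemma isSLKKMCover_colorClasses {X C : Type*} [PseudoMetricSpace X] {K : Set X} {χ : X → C}
    (hχ : ∀ x ∈ K, ∀ y ∈ K, dist x y = 1 → χ x ≠ χ y) :
    IsSLKKMCover K fun c : χ '' K => K ∩ χ ⁻¹' {c.1} where
  subset _ := inter_subset_left
  subset_iUnion x hx := mem_iUnion.2 ⟨⟨χ x, mem_image_of_mem χ hx⟩, hx, rfl⟩
  dist_ne_one _ x hx y hy hxy := hχ x hx.1 y hy.1 hxy (hx.2.trans hy.2.symm)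

lemma encard_setOf_mem_thickening_colorClasses_le {X C : Type*} [PseudoMetricSpace X]
    (K : Set X) (χ : X → C) (ε : ℝ) (p : X) :
    {c : χ '' K | p ∈ thickening ε (K ∩ χ ⁻¹' {c.1})}.encard ≤
      (χ '' (K ∩ ball p ε)).encard := by
  refine encard_le_encard_of_injOn (fun c hc => ?_) Subtype.val_injective.injOn
  obtain ⟨x, hx, hpx⟩ := mem_thickening_iff.1 hc
  exact ⟨x, ⟨hx.1, mem_ball'.2 hpx⟩, hx.2⟩

lemma setOf_inter_preimage_singleton_inter_nonempty {X C : Type*} (χ : X → C) (s t : Set X) :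
    {c | (s ∩ χ ⁻¹' {c} ∩ t).Nonempty} = χ '' (s ∩ t) := by
  ext c
  simp only [Set.Nonempty, mem_ofPred_eq, mem_image, mem_inter_iff, mem_preimage,
    mem_singleton_iff]
  aesop

theorem neighborhood_kkm_lebesgue_general
    (d : ℕ) (C : Type*) (χ : (Fin d → ℝ) → C)
    (hχ : ∀ x ∈ Set.Icc (0 : Fin d → ℝ) 1, ∀ y ∈ Set.Icc (0 : Fin d → ℝ) 1,
      dist x y = 1 → χ x ≠ χ y)
    (ε : ℝ) (hε : 0 < ε) :
    ∃ p ∈ Set.Icc (0 : Fin d → ℝ) 1,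
      (⌈(1 + ε / (1 + ε)) ^ d⌉₊ : ℕ∞) ≤
        {c : C | (Set.Icc (0 : Fin d → ℝ) 1 ∩ χ ⁻¹' {c} ∩ Metric.ball p ε).Nonempty}.encard := by
  have hr0 : 0 ≤ ε / (1 + ε) := by positivity
  have hr1 : ε / (1 + ε) ≤ 1 := (div_le_one (by linarith)).2 (by linarith)
  have hrε : ε / (1 + ε) < ε := div_lt_self hε (by linarith)
  simp only [setOf_inter_preimage_singleton_inter_nonempty]
  rcases (χ '' Icc 0 1).finite_or_infinite with hfin | hinf
  · have := hfin.to_subtype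
    obtain ⟨p, hp, hle⟩ := (isSLKKMCover_colorClasses hχ).exists_le_encard hr0 hr1 hrε
    exact ⟨p, hp, hle.trans (encard_setOf_mem_thickening_colorClasses_le _ χ ε p)⟩
  · obtain ⟨p, hp, hpinf⟩ : ∃ p ∈ Icc 0 1, (χ '' (Icc 0 1 ∩ ball p ε)).Infinite := by
      by_contra! h
      exact hinf <| isCompact_Icc.finite_image_of_forall_finite_nhdsWithin fun p hp =>
        ⟨_, inter_mem_nhdsWithin _ (ball_mem_nhds p hε), h p hp⟩
    exact ⟨p, hp, hpinf.encard_eq ▸ le_top⟩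

/-- **Neighborhood KKM-Lebesgue Theorem.** Given an SLKKM coloring of `[0,1]^d`
(no two points of the cube at `ℓ∞` distance `1` get the same color), for any `ε > 0`
there is a point `p` of the cube whose open `ℓ∞` `ε`-ball contains points of at least
`⌈(1 + ε/(1+ε))^d⌉` different colors. -/
theorem neighborhood_kkm_lebesgue
    (d : ℕ) (hd : 1 ≤ d) (C : Type*) (χ : (Fin d → ℝ) → C)
    (hχ : ∀ x ∈ Set.Icc (0 : Fin d → ℝ) 1, ∀ y ∈ Set.Icc (0 : Fin d → ℝ) 1,
      dist x y = 1 → χ x ≠ χ y)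
    (ε : ℝ) (hε : 0 < ε) :
    ∃ p ∈ Set.Icc (0 : Fin d → ℝ) 1,
      (⌈(1 + ε / (1 + ε)) ^ d⌉₊ : ℕ∞) ≤
        {c : C | (Set.Icc (0 : Fin d → ℝ) 1 ∩ χ ⁻¹' {c} ∩ Metric.ball p ε).Nonempty}.encard :=
  neighborhood_kkm_lebesgue_general d C χ hχ ε hε
end

section
/- For every dimension d ≥ 1, every SLKKM coloring χ : [0,1]^d → C, and every ε ∈ (0, 1/2], there exists a point p ∈ [0,1]^d such that the open ℓ∞ ball of radius ε centered at p contains points of at least ⌈(1 + (2/3)ε)^d⌉ different colors, i.e. the set {c ∈ C : χ⁻¹(c) ∩ B°_∞(ε, p) ≠ ∅} has cardinality at least ⌈(1 + (2/3)ε)^d⌉. -/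
/-
Group the colors by the set of faces `{x i = 1}` that their color class touches: this gives at
most `2^d` sets covering the cube, none of which meets two opposite faces, and a point within `ε`
of `k` of these sets sees at least `k` colors in its `ε`-ball.

For any finite cover of the cube by such sets, the `ε`-neighbourhoods cut down to the cube have
total volume at least `(1 + ε)^d`. By induction on `d`, slice along the first coordinate: the slice
at height `t` of a neighbourhood contains the neighbourhood of the slice at any height within `ε`
of `t`, and the slices at any height cover the smaller cube. Compare height `t` with height `0`
for `t < ε`, with height `1` for `t > 1 - ε`, and with height `t ∓ ε/2` for sets missing the top
(resp. bottom) face; integrating in `t` gains the factor `ε + ε + (1 - ε) = 1 + ε`. Averaging over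
the cube gives a point in at least `(1 + ε)^d ≥ (1 + 2ε/3)^d` neighbourhoods.
-/

open MeasureTheory Metric Set
open scoped ENNReal

namespace NeighborhoodKKM

theorem exists_mem_sum_measure_inter_le_mul_ncard {α ι : Type*} [MeasurableSpace α] [Fintype ι]
    {μ : Measure α} {s : Set α} (hs : MeasurableSet s) (hs0 : μ s ≠ 0) (hs1 : μ s ≠ ∞)
    {N : ι → Set α} (hN : ∀ a, MeasurableSet (N a)) :
    ∃ p ∈ s, ∑ a, μ (N a ∩ s) ≤ μ s * {a | p ∈ N a}.ncard := by
  classical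
  have hint : ∫⁻ p in s, ∑ a, (N a).indicator 1 p ∂μ = ∑ a, μ (N a ∩ s) := by
    rw [lintegral_finsetSum _ fun a _ => measurable_one.indicator (hN a)]
    simp only [lintegral_indicator_one (hN _), Measure.restrict_apply (hN _)]
  have hfin : ∫⁻ p in s, ∑ a, (N a).indicator 1 p ∂μ ≠ ∞ := by
    rw [hint]
    exact ENNReal.sum_ne_top.2 fun a _ => measure_ne_top_of_subset inter_subset_right hs1
  obtain ⟨p, hp, hle⟩ := exists_setLAverage_le hs0 hs.nullMeasurableSet hfin
  rw [setLAverage_eq, hint, ENNReal.div_le_iff hs0 hs1] at hle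
  refine ⟨p, hp, hle.trans_eq ?_⟩
  simp [mul_comm, Set.indicator_apply, Finset.sum_boole, Set.ncard_eq_toFinset_card']

theorem setLIntegral_Icc_comp_add_right (g : ℝ → ℝ≥0∞) (a b c : ℝ) :
    ∫⁻ x in Icc a b, g (x + c) = ∫⁻ x in Icc (a + c) (b + c), g x := by
  have h := (measurePreserving_add_right volume c).setLIntegral_comp_preimage_emb
    (measurableEmbedding_addRight c) g (Icc (a + c) (b + c))
  rwa [preimage_add_const_Icc, add_sub_cancel_right, add_sub_cancel_right] at h

theorem mul_ofReal_one_add_le_lintegral_add_lintegral {F G : ℝ → ℝ≥0∞} (hF : Measurable F)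
    {ε : ℝ} (hε0 : 0 ≤ ε) (hε1 : ε ≤ 1) {P : ℝ≥0∞}
    (hbot : ∀ t ∈ Ico 0 ε, P ≤ F t) (htop : ∀ t ∈ Ioc (1 - ε) 1, P ≤ G t)
    (hmid : ∀ t ∈ Icc 0 (1 - ε), P ≤ F (t + ε) + G t) :
    P * ENNReal.ofReal (1 + ε) ≤ (∫⁻ t, F t) + ∫⁻ t, G t := by
  have hF_bot : P * ENNReal.ofReal ε ≤ ∫⁻ t in Ico 0 ε, F t := by
    simpa using setLIntegral_mono' (μ := volume) measurableSet_Ico hbot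
  have hG_top : P * ENNReal.ofReal ε ≤ ∫⁻ t in Ioc (1 - ε) 1, G t := by
    simpa using setLIntegral_mono' (μ := volume) measurableSet_Ioc htop
  have hFG_mid : P * ENNReal.ofReal (1 - ε) ≤
      (∫⁻ t in Icc ε 1, F t) + ∫⁻ t in Icc 0 (1 - ε), G t := by
    calc P * ENNReal.ofReal (1 - ε) = ∫⁻ _ in Icc 0 (1 - ε), P := by simp
      _ ≤ ∫⁻ t in Icc 0 (1 - ε), (F (t + ε) + G t) := setLIntegral_mono' measurableSet_Icc hmid
      _ = _ := by
        rw [lintegral_add_left (f := fun t => F (t + ε)) (hF.comp (measurable_add_const ε)),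
          setLIntegral_Icc_comp_add_right, zero_add, sub_add_cancel]
  have hF_split : (∫⁻ t in Ico 0 ε, F t) + (∫⁻ t in Icc ε 1, F t) ≤ ∫⁻ t, F t := by
    rw [← lintegral_union measurableSet_Icc
      (disjoint_left.2 fun t (h₁ : t ∈ Ico 0 ε) h₂ => (h₁.2.trans_le h₂.1).false)]
    exact setLIntegral_le_lintegral _ _
  have hG_split : (∫⁻ t in Icc 0 (1 - ε), G t) + (∫⁻ t in Ioc (1 - ε) 1, G t) ≤ ∫⁻ t, G t := by
    rw [← lintegral_union measurableSet_Ioc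
      (disjoint_left.2 fun t (h₁ : t ∈ Icc 0 (1 - ε)) h₂ => (h₁.2.trans_lt h₂.1).false)]
    exact setLIntegral_le_lintegral _ _
  calc P * ENNReal.ofReal (1 + ε)
      = P * ENNReal.ofReal ε + (P * ENNReal.ofReal (1 - ε) + P * ENNReal.ofReal ε) := by
        rw [← mul_add, ← mul_add, ← ENNReal.ofReal_add (by linarith) hε0,
          ← ENNReal.ofReal_add hε0 (by linarith)]
        ring_nf
    _ ≤ (∫⁻ t in Ico 0 ε, F t) + (((∫⁻ t in Icc ε 1, F t) + ∫⁻ t in Icc 0 (1 - ε), G t) +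
          ∫⁻ t in Ioc (1 - ε) 1, G t) := by
        gcongr
    _ = ((∫⁻ t in Ico 0 ε, F t) + ∫⁻ t in Icc ε 1, F t) +
          ((∫⁻ t in Icc 0 (1 - ε), G t) + ∫⁻ t in Ioc (1 - ε) 1, G t) := by ring
    _ ≤ (∫⁻ t, F t) + ∫⁻ t, G t := add_le_add hF_split hG_split

def cubeThickening {d : ℕ} (ε : ℝ) (A : Set (Fin d → ℝ)) : Set (Fin d → ℝ) :=
  thickening ε A ∩ Icc 0 1

def AvoidsOppositeFaces {d : ℕ} (A : Set (Fin d → ℝ)) : Prop :=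
  ∀ x ∈ A, ∀ y ∈ A, ∀ i, x i = 0 → y i ≠ 1

theorem measurableSet_cubeThickening {d : ℕ} (ε : ℝ) (A : Set (Fin d → ℝ)) :
    MeasurableSet (cubeThickening ε A) :=
  isOpen_thickening.measurableSet.inter measurableSet_Icc

theorem cubeThickening_empty {d : ℕ} (ε : ℝ) : cubeThickening ε (∅ : Set (Fin d → ℝ)) = ∅ := by
  simp [cubeThickening]

theorem measurePreserving_cons (e : ℕ) :
    MeasurePreserving (fun p : ℝ × (Fin e → ℝ) => (Fin.cons p.1 p.2 : Fin (e + 1) → ℝ))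
      (volume.prod volume) volume := by
  have h := (volume_preserving_piFinSuccAbove (fun _ : Fin (e + 1) => ℝ) 0).symm
  have hcons : ⇑(MeasurableEquiv.piFinSuccAbove (fun _ : Fin (e + 1) => ℝ) 0).symm =
      fun p : ℝ × (Fin e → ℝ) => (Fin.cons p.1 p.2 : Fin (e + 1) → ℝ) := by
    funext p
    simp [MeasurableEquiv.piFinSuccAbove, Fin.consEquiv]
  rwa [hcons] at h

section Slice

variable {e : ℕ}

def slice (t : ℝ) (A : Set (Fin (e + 1) → ℝ)) : Set (Fin e → ℝ) :=
  {y | Fin.cons t y ∈ A}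

theorem measurable_volume_slice {A : Set (Fin (e + 1) → ℝ)} (hA : MeasurableSet A) :
    Measurable fun t => volume (slice t A) :=
  measurable_measure_prodMk_left (hA.preimage (measurePreserving_cons e).measurable)

theorem lintegral_volume_slice {A : Set (Fin (e + 1) → ℝ)} (hA : MeasurableSet A) :
    ∫⁻ t, volume (slice t A) = volume A := by
  rw [← (measurePreserving_cons e).measure_preimage hA.nullMeasurableSet,
    Measure.prod_apply (hA.preimage (measurePreserving_cons e).measurable)]
  rfl

theorem dist_cons_cons_lt {ε t s : ℝ} {y z : Fin e → ℝ} (hε : 0 < ε) (hts : dist t s < ε)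
    (hyz : dist y z < ε) : dist (Fin.cons t y : Fin (e + 1) → ℝ) (Fin.cons s z) < ε := by
  rw [dist_pi_lt_iff hε]
  intro i
  induction i using Fin.cases with
  | zero => simpa using hts
  | succ j => simpa using (dist_le_pi_dist y z j).trans_lt hyz

theorem cons_mem_Icc_iff {t : ℝ} {y : Fin e → ℝ} :
    (Fin.cons t y : Fin (e + 1) → ℝ) ∈ Icc 0 1 ↔ t ∈ Icc 0 1 ∧ y ∈ Icc 0 1 := by
  simp only [mem_Icc, Fin.le_cons, Fin.cons_le]
  exact and_and_and_comm

theorem cubeThickening_slice_subset {ε s t : ℝ} {A : Set (Fin (e + 1) → ℝ)}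
    (hst : dist t s < ε) (ht : t ∈ Icc 0 1) :
    cubeThickening ε (slice s A) ⊆ slice t (cubeThickening ε A) := by
  rintro y ⟨hy, hy01⟩
  obtain ⟨z, hz, hyz⟩ := mem_thickening_iff.1 hy
  have hε : 0 < ε := dist_nonneg.trans_lt hst
  exact ⟨mem_thickening_iff.2 ⟨_, hz, dist_cons_cons_lt hε hst hyz⟩, cons_mem_Icc_iff.2 ⟨ht, hy01⟩⟩

theorem volume_cubeThickening_slice_le {ε s t : ℝ} {A : Set (Fin (e + 1) → ℝ)}
    (hst : dist t s < ε) (ht : t ∈ Icc 0 1) :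
    volume (cubeThickening ε (slice s A)) ≤ volume (slice t (cubeThickening ε A)) :=
  measure_mono (cubeThickening_slice_subset hst ht)

theorem slice_eq_empty {t : ℝ} {A : Set (Fin (e + 1) → ℝ)} (h : ∀ x ∈ A, x 0 ≠ t) :
    slice t A = ∅ :=
  eq_empty_of_forall_notMem fun y hy => h _ hy (Fin.cons_zero (α := fun _ => ℝ) t y)

theorem AvoidsOppositeFaces.slice {A : Set (Fin (e + 1) → ℝ)} (hA : AvoidsOppositeFaces A)
    (t : ℝ) : AvoidsOppositeFaces (slice t A) :=
  fun x hx y hy i hxi => by simpa using hA _ hx _ hy i.succ (by simpa using hxi)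

theorem Icc_subset_iUnion_slice {ι : Type*} {S : ι → Set (Fin (e + 1) → ℝ)}
    (hS : Icc 0 1 ⊆ ⋃ a, S a) {t : ℝ} (ht : t ∈ Icc 0 1) : Icc 0 1 ⊆ ⋃ a, slice t (S a) := by
  intro y hy
  simpa [NeighborhoodKKM.slice] using hS (cons_mem_Icc_iff.2 ⟨ht, hy⟩)

theorem le_sum_volume_slice_cubeThickening {ι : Type*} [Fintype ι]
    {S : ι → Set (Fin (e + 1) → ℝ)} {ε u t : ℝ} {P : ℝ≥0∞} {T : Finset ι}
    (hP : P ≤ ∑ a, volume (cubeThickening ε (slice u (S a))))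
    (hT : ∀ a ∉ T, slice u (S a) = ∅) (htu : dist t u < ε) (ht : t ∈ Icc 0 1) :
    P ≤ ∑ a ∈ T, volume (slice t (cubeThickening ε (S a))) :=
  calc P ≤ ∑ a, volume (cubeThickening ε (slice u (S a))) := hP
    _ = ∑ a ∈ T, volume (cubeThickening ε (slice u (S a))) :=
      (Finset.sum_subset T.subset_univ fun a _ ha => by
        rw [hT a ha, cubeThickening_empty, measure_empty]).symm
    _ ≤ ∑ a ∈ T, volume (slice t (cubeThickening ε (S a))) :=
      Finset.sum_le_sum fun _ _ => volume_cubeThickening_slice_le htu ht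

theorem mul_ofReal_one_add_le_sum_volume_cubeThickening {ι : Type*} [Fintype ι]
    {S : ι → Set (Fin (e + 1) → ℝ)} (hS : ∀ a, AvoidsOppositeFaces (S a))
    {ε : ℝ} (hε0 : 0 < ε) (hε1 : ε ≤ 1) {P : ℝ≥0∞}
    (hslice : ∀ u ∈ Icc (0 : ℝ) 1, P ≤ ∑ a, volume (cubeThickening ε (slice u (S a)))) :
    P * ENNReal.ofReal (1 + ε) ≤ ∑ a, volume (cubeThickening ε (S a)) := by
  classical
  set f : ι → ℝ → ℝ≥0∞ := fun a t => volume (slice t (cubeThickening ε (S a))) with hf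
  set B : Finset ι := Finset.univ.filter fun a => ∃ x ∈ S a, x 0 = 0
  have hbot : ∀ t ∈ Ico 0 ε, P ≤ ∑ a ∈ B, f a t := fun t ht =>
    le_sum_volume_slice_cubeThickening (hslice 0 ⟨le_rfl, zero_le_one⟩)
      (fun a ha => slice_eq_empty fun x hx hx0 => by simp_all [B])
      (by rw [Real.dist_eq, abs_sub_lt_iff]; constructor <;> linarith [ht.1, ht.2])
      ⟨ht.1, ht.2.le.trans hε1⟩
  have htop : ∀ t ∈ Ioc (1 - ε) 1, P ≤ ∑ a ∈ Bᶜ, f a t := fun t ht =>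
    le_sum_volume_slice_cubeThickening (hslice 1 ⟨zero_le_one, le_rfl⟩)
      (fun a ha => by
        obtain ⟨x, hx, hx0⟩ := (Finset.mem_filter.1 (Finset.notMem_compl.1 ha)).2
        exact slice_eq_empty fun y hy => hS a x hx y hy 0 hx0)
      (by rw [Real.dist_eq, abs_sub_lt_iff]; constructor <;> linarith [ht.1, ht.2])
      ⟨by linarith [ht.1], ht.2⟩
  have hmid : ∀ t ∈ Icc 0 (1 - ε), P ≤ ∑ a ∈ B, f a (t + ε) + ∑ a ∈ Bᶜ, f a t := fun t ht =>
    calc P ≤ ∑ a, volume (cubeThickening ε (slice (t + ε / 2) (S a))) :=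
          hslice _ ⟨by linarith [ht.1], by linarith [ht.2]⟩
      _ = ∑ a ∈ B, volume (cubeThickening ε (slice (t + ε / 2) (S a))) +
          ∑ a ∈ Bᶜ, volume (cubeThickening ε (slice (t + ε / 2) (S a))) :=
        (Finset.sum_add_sum_compl B _).symm
      _ ≤ ∑ a ∈ B, f a (t + ε) + ∑ a ∈ Bᶜ, f a t := by
        gcongr with a _ a _
        · exact volume_cubeThickening_slice_le
            (by rw [Real.dist_eq, abs_sub_lt_iff]; constructor <;> linarith)
            ⟨by linarith [ht.1], by linarith [ht.2]⟩
        · exact volume_cubeThickening_slice_le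
            (by rw [Real.dist_eq, abs_sub_lt_iff]; constructor <;> linarith)
            ⟨ht.1, by linarith [ht.2]⟩
  have hf_meas : ∀ a, Measurable (f a) := fun a =>
    measurable_volume_slice (measurableSet_cubeThickening ε (S a))
  calc P * ENNReal.ofReal (1 + ε) ≤ (∫⁻ t, ∑ a ∈ B, f a t) + ∫⁻ t, ∑ a ∈ Bᶜ, f a t :=
        mul_ofReal_one_add_le_lintegral_add_lintegral
          (Finset.measurable_sum B fun a _ => hf_meas a) hε0.le hε1 hbot htop hmid
    _ = ∑ a, volume (cubeThickening ε (S a)) := by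
        rw [lintegral_finsetSum _ fun a _ => hf_meas a, lintegral_finsetSum _ fun a _ => hf_meas a,
          Finset.sum_add_sum_compl]
        simp only [hf, lintegral_volume_slice (measurableSet_cubeThickening ε _)]

end Slice

theorem ofReal_one_add_pow_le_sum_volume_cubeThickening {d : ℕ} {ι : Type*} [Fintype ι]
    {S : ι → Set (Fin d → ℝ)} (hS : ∀ a, AvoidsOppositeFaces (S a))
    (hcover : Icc 0 1 ⊆ ⋃ a, S a) {ε : ℝ} (hε0 : 0 < ε) (hε1 : ε ≤ 1) :
    ENNReal.ofReal ((1 + ε) ^ d) ≤ ∑ a, volume (cubeThickening ε (S a)) := by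
  induction d with
  | zero =>
    have hcube : ∀ x : Fin 0 → ℝ, x ∈ Icc 0 1 := fun x => ⟨finZeroElim, finZeroElim⟩
    obtain ⟨a, ha⟩ := mem_iUnion.1 (hcover (hcube 0))
    have huniv : cubeThickening ε (S a) = univ := eq_univ_of_forall fun x =>
      ⟨Subsingleton.elim 0 x ▸ self_subset_thickening hε0 _ ha, hcube x⟩
    calc ENNReal.ofReal ((1 + ε) ^ 0) = volume (cubeThickening ε (S a)) := by
          simp [huniv, volume_pi]
      _ ≤ ∑ a, volume (cubeThickening ε (S a)) :=
        Finset.single_le_sum (f := fun a => volume (cubeThickening ε (S a)))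
          (fun _ _ => zero_le) (Finset.mem_univ a)
  | succ e ih =>
    rw [pow_succ, ENNReal.ofReal_mul (by positivity)]
    exact mul_ofReal_one_add_le_sum_volume_cubeThickening hS hε0 hε1 fun u hu =>
      ih (fun a => (hS a).slice u) (Icc_subset_iUnion_slice hcover hu)

theorem dist_eq_one_of_apply_eq_zero_of_apply_eq_one {d : ℕ} {x y : Fin d → ℝ} (hx : x ∈ Icc 0 1)
    (hy : y ∈ Icc 0 1) {i : Fin d} (hx0 : x i = 0) (hy1 : y i = 1) : dist x y = 1 :=
  le_antisymm
    ((dist_pi_le_iff zero_le_one).2 fun j =>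
      Real.dist_le_of_mem_Icc_01 ⟨hx.1 j, hx.2 j⟩ ⟨hy.1 j, hy.2 j⟩)
    (by simpa [hx0, hy1] using dist_le_pi_dist x y i)

section Coloring

variable {d : ℕ} {C : Type*} (χ : (Fin d → ℝ) → C)

def topFaces (c : C) : Set (Fin d) :=
  {i | ∃ x ∈ Icc (0 : Fin d → ℝ) 1, χ x = c ∧ x i = 1}

def topFaceClass (T : Set (Fin d)) : Set (Fin d → ℝ) :=
  {x ∈ Icc 0 1 | topFaces χ (χ x) = T}

variable {χ}

theorem avoidsOppositeFaces_topFaceClass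
    (hχ : ∀ x ∈ Icc (0 : Fin d → ℝ) 1, ∀ y ∈ Icc (0 : Fin d → ℝ) 1, dist x y = 1 → χ x ≠ χ y)
    (T : Set (Fin d)) : AvoidsOppositeFaces (topFaceClass χ T) := by
  rintro x ⟨hx, rfl⟩ y ⟨hy, hyx⟩ i hx0 hy1
  obtain ⟨z, hz, hzx, hz1⟩ : i ∈ topFaces χ (χ x) := hyx ▸ ⟨y, hy, rfl, hy1⟩
  exact hχ x hx z hz (dist_eq_one_of_apply_eq_zero_of_apply_eq_one hx hz hx0 hz1) hzx.symm

theorem encard_topFaceClass_le (p : Fin d → ℝ) (ε : ℝ) :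
    {T | p ∈ thickening ε (topFaceClass χ T)}.encard ≤
      {c : C | (Icc (0 : Fin d → ℝ) 1 ∩ χ ⁻¹' {c} ∩ ball p ε).Nonempty}.encard := by
  refine le_trans (encard_le_encard ?_) (encard_image_le (topFaces χ) _)
  intro T hT
  obtain ⟨x, ⟨hx, rfl⟩, hpx⟩ := mem_thickening_iff.1 hT
  exact ⟨χ x, ⟨x, ⟨hx, rfl⟩, mem_ball.2 (dist_comm p x ▸ hpx)⟩, rfl⟩

end Coloring

end NeighborhoodKKM

open NeighborhoodKKM in
theorem neighborhood_kkm_lebesgue_half_general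
    (d : ℕ) (C : Type*) (χ : (Fin d → ℝ) → C)
    (hχ : ∀ x ∈ Set.Icc (0 : Fin d → ℝ) 1, ∀ y ∈ Set.Icc (0 : Fin d → ℝ) 1,
      dist x y = 1 → χ x ≠ χ y)
    (ε : ℝ) (hε : ε ∈ Set.Ioc (0 : ℝ) (1/2)) :
    ∃ p ∈ Set.Icc (0 : Fin d → ℝ) 1,
      (⌈(1 + (2/3) * ε) ^ d⌉₊ : ℕ∞) ≤
        {c : C | (Set.Icc (0 : Fin d → ℝ) 1 ∩ χ ⁻¹' {c} ∩ Metric.ball p ε).Nonempty}.encard := by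
  obtain ⟨hε0, hε_half⟩ := hε
  have hvol := ofReal_one_add_pow_le_sum_volume_cubeThickening
    (avoidsOppositeFaces_topFaceClass hχ) (fun x hx => mem_iUnion.2 ⟨_, hx, rfl⟩) hε0
    (by linarith)
  have hcube : volume (Icc (0 : Fin d → ℝ) 1) = 1 := by simp [Real.volume_Icc_pi]
  obtain ⟨p, hp, hcount⟩ := exists_mem_sum_measure_inter_le_mul_ncard measurableSet_Icc
    (hcube ▸ one_ne_zero) (hcube ▸ ENNReal.one_ne_top)
    fun T => (isOpen_thickening (δ := ε) (E := topFaceClass χ T)).measurableSet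
  rw [hcube, one_mul] at hcount
  have hreal : (1 + 2 / 3 * ε) ^ d ≤ {T | p ∈ thickening ε (topFaceClass χ T)}.ncard :=
    calc (1 + 2 / 3 * ε) ^ d ≤ (1 + ε) ^ d := by gcongr; linarith
      _ ≤ _ := ENNReal.ofReal_le_natCast.1 (hvol.trans hcount)
  refine ⟨p, hp, ?_⟩
  calc (⌈(1 + 2 / 3 * ε) ^ d⌉₊ : ℕ∞) ≤ {T | p ∈ thickening ε (topFaceClass χ T)}.ncard := by
        exact_mod_cast Nat.ceil_le.2 hreal
    _ = {T | p ∈ thickening ε (topFaceClass χ T)}.encard := (toFinite _).cast_ncard_eq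
    _ ≤ _ := encard_topFaceClass_le p ε

/-- **Neighborhood KKM-Lebesgue Theorem, `ε ∈ (0, 1/2]` version.** Given an SLKKM coloring
of `[0,1]^d`, for any `ε ∈ (0, 1/2]` there is a point `p` of the cube whose open `ℓ∞`
`ε`-ball contains points of at least `⌈(1 + (2/3)ε)^d⌉` different colors. -/
theorem neighborhood_kkm_lebesgue_half
    (d : ℕ) (hd : 1 ≤ d) (C : Type*) (χ : (Fin d → ℝ) → C)
    (hχ : ∀ x ∈ Set.Icc (0 : Fin d → ℝ) 1, ∀ y ∈ Set.Icc (0 : Fin d → ℝ) 1,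
      dist x y = 1 → χ x ≠ χ y)
    (ε : ℝ) (hε : ε ∈ Set.Ioc (0 : ℝ) (1/2)) :
    ∃ p ∈ Set.Icc (0 : Fin d → ℝ) 1,
      (⌈(1 + (2/3) * ε) ^ d⌉₊ : ℕ∞) ≤
        {c : C | (Set.Icc (0 : Fin d → ℝ) 1 ∩ χ ⁻¹' {c} ∩ Metric.ball p ε).Nonempty}.encard :=
  neighborhood_kkm_lebesgue_half_general d C χ hχ ε hε
end

section
/- For every dimension d ≥ 1, every Lebesgue cover {C_n}_{n∈[N]} of [0,1]^d, and every ε > 0, there exists a point p ∈ [0,1]^d such that the open ℓ∞ ball of radius ε centered at p intersects at least ⌈(1 + ε/(1+ε))^d⌉ of the sets C_n, i.e. |{n ∈ [N] : B°_∞(ε, p) ∩ C_n ≠ ∅}| ≥ ⌈(1 + ε/(1+ε))^d⌉. -/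
/-!
Let `φ_θ` be Lebesgue measure on `(θ/2, 1 - θ/2)` plus atoms of mass `θ` at `0` and `1`, so that
`φ_θ [0,1] = 1 + θ`. In dimension one, every `F ⊆ [0,1]` that misses an endpoint satisfies
`φ_θ F ≤ λ (N F ∩ [0,1])`, where `N F` is the closed `θ`-neighbourhood of `F`: next to the
endpoint in `F` and just below `inf F` the neighbourhood gains a total length `θ` outside
`F ∩ (θ/2, 1 - θ/2)`. By the layer-cake formula this becomes an inequality of integrals, and
integrating out one coordinate at a time gives `φ_θ^d D ≤ λ^d (N D)` for every piece
`D = C n ∩ [0,1]^d`, because no piece meets two opposite faces. Summing over the cover,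
`(1 + θ)^d ≤ ∑ n, λ^d (N (C n ∩ [0,1]^d))`, so some point of the cube lies in `⌈(1 + θ)^d⌉` of
these neighbourhoods. Finally take `θ = ε / (1 + ε) < ε`.
-/

open MeasureTheory Set Function
open scoped ENNReal Pointwise

noncomputable section

namespace NeighborhoodLebesgue

instance : IsProbabilityMeasure (volume.restrict (Icc (0 : ℝ) 1)) := ⟨by simp⟩

def endpointWeighted (θ : ℝ) : Measure ℝ :=
  volume.restrict (Ioo (θ / 2) (1 - θ / 2)) +
    ENNReal.ofReal θ • (Measure.dirac 0 + Measure.dirac 1)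

variable {θ r : ℝ}

lemma endpointWeighted_apply {F : Set ℝ} (hF : MeasurableSet F) :
    endpointWeighted θ F = volume (F ∩ Ioo (θ / 2) (1 - θ / 2))
      + ENNReal.ofReal θ * (F.indicator 1 0 + F.indicator 1 1) := by
  simp only [endpointWeighted, Measure.add_apply, Measure.smul_apply, smul_eq_mul,
    Measure.restrict_apply hF, Measure.dirac_apply' _ hF]

instance : IsFiniteMeasure (endpointWeighted θ) :=
  ⟨by simp [endpointWeighted_apply MeasurableSet.univ, ENNReal.mul_lt_top]⟩

lemma endpointWeighted_Icc (hθ0 : 0 ≤ θ) (hθ1 : θ ≤ 1) :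
    endpointWeighted θ (Icc 0 1) = ENNReal.ofReal (1 + θ) := by
  have hmid : Icc (0 : ℝ) 1 ∩ Ioo (θ / 2) (1 - θ / 2) = Ioo (θ / 2) (1 - θ / 2) :=
    inter_eq_self_of_subset_right
      (Ioo_subset_Icc_self.trans (Icc_subset_Icc (by linarith) (by linarith)))
  rw [endpointWeighted_apply measurableSet_Icc, hmid, Real.volume_Ioo,
    indicator_of_mem (left_mem_Icc.2 zero_le_one),
    indicator_of_mem (right_mem_Icc.2 zero_le_one), Pi.one_apply, Pi.one_apply,
    one_add_one_eq_two, ← ENNReal.ofReal_ofNat 2, ← ENNReal.ofReal_mul hθ0,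
    ← ENNReal.ofReal_add (by linarith) (by positivity)]
  congr 1
  ring

/- Besides `F ∩ (θ/2, 1 - θ/2)`, the set `U` contains `(1 - θ/2, 1)` near `1 ∈ F` and an interval
of length `θ/2` just below `max (θ/2) (inf F)`, all three disjoint. If `inf F > 1 - θ/2` the middle
part of `F` is empty and `[1 - θ, 1] ⊆ U` suffices. -/
lemma volume_inter_add_le_of_one_mem (hθ0 : 0 ≤ θ) (hθ1 : θ ≤ 1) (hθr : θ ≤ r) {F U : Set ℝ}
    (hF : F ⊆ Icc 0 1) (h1 : (1 : ℝ) ∈ F) (hU : ∀ x ∈ F, Icc (x - r) (x + r) ⊆ U) :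
    volume (F ∩ Ioo (θ / 2) (1 - θ / 2)) + ENNReal.ofReal θ ≤ volume (U ∩ Icc 0 1) := by
  set h := θ / 2 with hh
  have hbdd : BddBelow F := ⟨0, fun x hx => (hF hx).1⟩
  set a := sInf F
  have ha0 : 0 ≤ a := le_csInf ⟨1, h1⟩ fun x hx => (hF hx).1
  have ha : ∀ x ∈ F, a ≤ x := fun x hx => csInf_le hbdd hx
  have hnear : ∀ t, a - r < t → t ≤ a + r → t ∈ U := by
    intro t ht₁ ht₂
    obtain ⟨x, hxF, hx⟩ := exists_lt_of_csInf_lt ⟨1, h1⟩ (show a < t + r by linarith)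
    exact hU x hxF ⟨by linarith, by linarith [ha x hxF]⟩
  have htop : Ioo (1 - h) 1 ⊆ U ∩ Icc 0 1 := fun t ht =>
    ⟨hU 1 h1 ⟨by linarith [ht.1], by linarith [ht.2]⟩, by linarith [ht.1], ht.2.le⟩
  have hθ : ENNReal.ofReal θ = ENNReal.ofReal h + ENNReal.ofReal h := by
    rw [← ENNReal.ofReal_add (by positivity) (by positivity), add_halves]
  rcases le_or_gt a (1 - h) with ha1 | ha1
  · obtain ⟨c, hc0, hca, hc⟩ : ∃ c, 0 ≤ c ∧ a - h ≤ c ∧ (c = 0 ∨ c = a - h) :=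
      ⟨max 0 (a - h), le_max_left _ _, le_max_right _ _, max_choice _ _⟩
    have hch : c + h ≤ 1 - h := by rcases hc with rfl | rfl <;> linarith
    have hJ : Ioo c (c + h) ⊆ U ∩ Icc 0 1 := fun t ht =>
      ⟨hnear t (by linarith [ht.1]) (by rcases hc with rfl | rfl <;> linarith [ht.2]),
        by linarith [ht.1], by linarith [ht.2]⟩
    have hJF : Disjoint (F ∩ Ioo h (1 - h)) (Ioo c (c + h)) :=
      disjoint_left.2 fun x hx hxJ => by
        rcases hc with rfl | rfl <;> linarith [ha x hx.1, hx.2.1, hxJ.2]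
    have hJtop : Disjoint (F ∩ Ioo h (1 - h) ∪ Ioo c (c + h)) (Ioo (1 - h) 1) :=
      disjoint_left.2 fun x hx hxtop => by
        rcases hx with hx | hx
        · linarith [hx.2.2, hxtop.1]
        · linarith [hx.2, hxtop.1]
    calc volume (F ∩ Ioo h (1 - h)) + ENNReal.ofReal θ
        = volume (F ∩ Ioo h (1 - h) ∪ Ioo c (c + h) ∪ Ioo (1 - h) 1) := by
          rw [measure_union hJtop measurableSet_Ioo, measure_union hJF measurableSet_Ioo,
            Real.volume_Ioo, Real.volume_Ioo, add_sub_cancel_left, sub_sub_cancel, hθ,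
            add_assoc]
      _ ≤ volume (U ∩ Icc 0 1) := measure_mono (union_subset (union_subset
          (fun x hx => ⟨hU x hx.1 ⟨by linarith, by linarith⟩, hF hx.1⟩) hJ) htop)
  · have hmid : F ∩ Ioo h (1 - h) = ∅ :=
      eq_empty_of_forall_notMem fun x hx => by linarith [ha x hx.1, hx.2.2]
    have hθtop : Icc (1 - θ) 1 ⊆ U ∩ Icc 0 1 := fun t ht =>
      ⟨hU 1 h1 ⟨by linarith [ht.1], by linarith [ht.2]⟩, by linarith [ht.1], ht.2⟩
    calc volume (F ∩ Ioo h (1 - h)) + ENNReal.ofReal θ = volume (Icc (1 - θ) 1) := by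
          rw [hmid, measure_empty, zero_add, Real.volume_Icc, sub_sub_cancel]
      _ ≤ volume (U ∩ Icc 0 1) := measure_mono hθtop

lemma volume_inter_add_le_of_zero_mem (hθ0 : 0 ≤ θ) (hθ1 : θ ≤ 1) (hθr : θ ≤ r)
    {F U : Set ℝ} (hF : F ⊆ Icc 0 1) (h0 : (0 : ℝ) ∈ F) (hU : ∀ x ∈ F, Icc (x - r) (x + r) ⊆ U) :
    volume (F ∩ Ioo (θ / 2) (1 - θ / 2)) + ENNReal.ofReal θ ≤ volume (U ∩ Icc 0 1) := by
  have hvol : ∀ s, volume ((fun t : ℝ => 1 - t) ⁻¹' s) = volume s := fun s =>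
    (Measure.measurePreserving_sub_left volume 1).measure_preimage_emb
      (MeasurableEquiv.subLeft 1).measurableEmbedding s
  have hmid :
      (fun t : ℝ => 1 - t) ⁻¹' Ioo (θ / 2) (1 - θ / 2) = Ioo (θ / 2) (1 - θ / 2) := by
    rw [preimage_const_sub_Ioo, sub_sub_cancel]
  have hunit : (fun t : ℝ => 1 - t) ⁻¹' Icc 0 1 = Icc 0 1 := by
    rw [preimage_const_sub_Icc, sub_zero, sub_self]
  have := volume_inter_add_le_of_one_mem hθ0 hθ1 hθr (F := (fun t => 1 - t) ⁻¹' F)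
    (U := (fun t => 1 - t) ⁻¹' U) (fun t ht => hunit ▸ hF ht) (by simpa using h0)
    fun x hx t ht => hU _ hx ⟨by linarith [ht.2], by linarith [ht.1]⟩
  rwa [← hmid, ← hunit, ← preimage_inter, ← preimage_inter, hvol, hvol] at this

lemma endpointWeighted_le_volume_inter_Icc (hθ0 : 0 ≤ θ) (hθ1 : θ ≤ 1) (hθr : θ ≤ r)
    {F U : Set ℝ} (hFm : MeasurableSet F) (hF : F ⊆ Icc 0 1)
    (hend : (0 : ℝ) ∉ F ∨ (1 : ℝ) ∉ F) (hU : ∀ x ∈ F, Icc (x - r) (x + r) ⊆ U) :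
    endpointWeighted θ F ≤ volume (U ∩ Icc 0 1) := by
  rw [endpointWeighted_apply hFm]
  by_cases h0 : (0 : ℝ) ∈ F <;> by_cases h1 : (1 : ℝ) ∈ F
  · tauto
  · simpa [h0, h1] using volume_inter_add_le_of_zero_mem hθ0 hθ1 hθr hF h0 hU
  · simpa [h0, h1] using volume_inter_add_le_of_one_mem hθ0 hθ1 hθr hF h1 hU
  · simp only [indicator_of_notMem h0, indicator_of_notMem h1, add_zero, mul_zero]
    exact measure_mono fun x hx => ⟨hU x hx.1 ⟨by linarith, by linarith⟩, hF hx.1⟩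

section LayerCake

variable {α β : Type*} [MeasurableSpace α] [MeasurableSpace β]

lemma lintegral_eq_lintegral_meas_ofReal_lt (μ : Measure α) {f : α → ℝ≥0∞}
    (hf : Measurable f) (hf_top : ∀ x, f x ≠ ∞) :
    ∫⁻ x, f x ∂μ = ∫⁻ s in Ioi (0 : ℝ), μ {x | ENNReal.ofReal s < f x} := by
  have h := lintegral_eq_lintegral_meas_lt μ (ae_of_all _ fun x => (f x).toReal_nonneg)
    hf.ennreal_toReal.aemeasurable
  simp only [ENNReal.ofReal_toReal (hf_top _)] at h
  rw [h]
  refine setLIntegral_congr_fun measurableSet_Ioi fun s hs => ?_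
  simp only [ENNReal.ofReal_lt_iff_lt_toReal hs.le (hf_top _)]

lemma lintegral_le_lintegral_of_meas_lt_le {μ : Measure α} {ν : Measure β} {f : α → ℝ≥0∞}
    {g : β → ℝ≥0∞} (hf : Measurable f) (hg : Measurable g) (hf_top : ∀ x, f x ≠ ∞)
    (hg_top : ∀ y, g y ≠ ∞) (h : ∀ c, μ {x | c < f x} ≤ ν {y | c < g y}) :
    ∫⁻ x, f x ∂μ ≤ ∫⁻ y, g y ∂ν := by
  rw [lintegral_eq_lintegral_meas_ofReal_lt μ hf hf_top,
    lintegral_eq_lintegral_meas_ofReal_lt ν hg hg_top]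
  exact lintegral_mono fun s => h _

end LayerCake

lemma lintegral_endpointWeighted_le (hθ0 : 0 ≤ θ) (hθ1 : θ ≤ 1) (hθr : θ ≤ r)
    {g g' : ℝ → ℝ≥0∞} (hg : Measurable g) (hg' : Measurable g') (hg_top : ∀ t, g t ≠ ∞)
    (hg'_top : ∀ t, g' t ≠ ∞) (hsupp : ∀ t ∉ Icc (0 : ℝ) 1, g t = 0) (hend : g 0 = 0 ∨ g 1 = 0)
    (hgg' : ∀ x, ∀ t ∈ Icc (x - r) (x + r), g x ≤ g' t) :
    ∫⁻ t, g t ∂endpointWeighted θ ≤ ∫⁻ t in Icc 0 1, g' t := by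
  refine lintegral_le_lintegral_of_meas_lt_le hg hg' hg_top hg'_top fun c => ?_
  rw [Measure.restrict_apply' measurableSet_Icc]
  refine endpointWeighted_le_volume_inter_Icc hθ0 hθ1 hθr (hg measurableSet_Ioi)
    (fun t ht => ?_) ?_ fun x hx t ht => lt_of_lt_of_le hx (hgg' x t ht)
  · by_contra h
    simp [hsupp t h] at ht
  · exact hend.imp (fun h => by simp [h]) fun h => by simp [h]

section Thickening

variable {ι : Type*} {s : Finset ι} {D : Set (ι → ℝ)}

def partialThickening (r : ℝ) (s : Finset ι) (D : Set (ι → ℝ)) : Set (ι → ℝ) :=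
  {y | ∃ x ∈ D, (∀ i ∈ s, |y i - x i| ≤ r) ∧ ∀ i ∉ s, y i = x i}

@[simp]
lemma partialThickening_empty : partialThickening r ∅ D = D := by
  ext y
  constructor
  · rintro ⟨x, hx, -, h⟩
    rwa [funext fun i => h i (Finset.notMem_empty i)]
  · exact fun hy => ⟨y, hy, by simp, fun _ _ => rfl⟩

lemma isCompact_partialThickening (hD : IsCompact D) : IsCompact (partialThickening r s D) := by
  classical
  have h : partialThickening r s D =
      D + Set.pi univ fun i => if i ∈ s then Icc (-r) r else {0} := by
    ext y
    simp only [partialThickening, mem_add, mem_univ_pi, mem_ofPred_eq]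
    constructor
    · rintro ⟨x, hx, hs, hns⟩
      refine ⟨x, hx, y - x, fun i => ?_, add_sub_cancel _ _⟩
      split_ifs with hi
      · exact abs_le.1 (hs i hi)
      · simp [hns i hi]
    · rintro ⟨x, hx, w, hw, rfl⟩
      refine ⟨x, hx, fun i hi => ?_, fun i hi => ?_⟩
      · simpa [hi, abs_le] using hw i
      · simpa [hi] using hw i
  rw [h]
  exact hD.add (isCompact_univ_pi fun i => by split_ifs <;> simp [isCompact_Icc])

lemma update_mem_partialThickening_insert [DecidableEq ι] {i : ι} (hi : i ∉ s) {x t : ℝ}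
    (ht : t ∈ Icc (x - r) (x + r)) {z : ι → ℝ} (hz : update z i x ∈ partialThickening r s D) :
    update z i t ∈ partialThickening r (insert i s) D := by
  obtain ⟨y, hy, hs, hns⟩ := hz
  have hyi : x = y i := by simpa using hns i hi
  refine ⟨y, hy, fun j hj => ?_, fun j hj => ?_⟩
  · rcases Finset.mem_insert.1 hj with rfl | hj
    · rw [update_self, ← hyi, abs_le]
      constructor <;> linarith [ht.1, ht.2]
    · simpa [ne_of_mem_of_not_mem hj hi] using hs j hj
  · have hji : j ≠ i := fun h => hj (h ▸ Finset.mem_insert_self i s)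
    simpa [hji] using hns j fun h => hj (Finset.mem_insert_of_mem h)

end Thickening

section Marginal

variable {ι : Type*} [DecidableEq ι] {X : ι → Type*} [∀ i, MeasurableSpace (X i)]
  {μ : ∀ i, Measure (X i)} {s : Finset ι}

lemma lmarginal_le_one [∀ i, IsProbabilityMeasure (μ i)] {f : (∀ i, X i) → ℝ≥0∞}
    (hf : ∀ x, f x ≤ 1) (x : ∀ i, X i) : (∫⋯∫⁻_s, f ∂μ) x ≤ 1 :=
  calc (∫⋯∫⁻_s, f ∂μ) x ≤ (∫⋯∫⁻_s, fun _ => 1 ∂μ) x := lmarginal_mono hf x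
    _ = 1 := by simp [lmarginal]

lemma exists_apply_eq_of_lmarginal_indicator_ne_zero {A : Set (∀ i, X i)} {i : ι}
    (hi : i ∉ s) {x : ∀ i, X i} (h : (∫⋯∫⁻_s, A.indicator 1 ∂μ) x ≠ 0) : ∃ y ∈ A, y i = x i := by
  contrapose! h
  have hzero : ∀ z, A.indicator (1 : (∀ i, X i) → ℝ≥0∞) (updateFinset x s z) = 0 := fun z =>
    indicator_of_notMem (fun hz => h _ hz (by simp [updateFinset, hi])) _
  simp only [lmarginal]
  exact (lintegral_congr hzero).trans lintegral_zero

end Marginal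

section Induction

variable {ι : Type*} {D : Set (ι → ℝ)}

lemma measurable_indicator_partialThickening [Countable ι] (hD : IsCompact D) (s : Finset ι) :
    Measurable ((partialThickening r s D).indicator (1 : (ι → ℝ) → ℝ≥0∞)) :=
  measurable_one.indicator (isCompact_partialThickening hD).measurableSet

lemma lmarginal_partialThickening_update_le_insert [Countable ι] [DecidableEq ι]
    {μ : ι → Measure ℝ} [∀ i, SigmaFinite (μ i)] (hD : IsCompact D) {s : Finset ι} {i : ι}
    (hi : i ∉ s) {x t : ℝ} (ht : t ∈ Icc (x - r) (x + r)) (q : ι → ℝ) :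
    (∫⋯∫⁻_s, (partialThickening r s D).indicator 1 ∂μ) (update q i x) ≤
      (∫⋯∫⁻_s, (partialThickening r (insert i s) D).indicator 1 ∂μ) (update q i t) := by
  rw [lmarginal_update_of_notMem (measurable_indicator_partialThickening hD _) hi,
    lmarginal_update_of_notMem (measurable_indicator_partialThickening hD _) hi]
  refine lmarginal_mono (fun z => ?_) q
  by_cases hz : update z i x ∈ partialThickening r s D
  · simp [indicator_of_mem hz, indicator_of_mem (update_mem_partialThickening_insert hi ht hz)]
  · simp [indicator_of_notMem hz]

lemma lmarginal_indicator_le_lmarginal_partialThickening [Countable ι] [DecidableEq ι]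
    (hθ0 : 0 ≤ θ) (hθ1 : θ ≤ 1) (hθr : θ ≤ r) (hD : IsCompact D) (hD01 : D ⊆ Icc 0 1)
    (hDend : ∀ i, (∀ x ∈ D, x i ≠ 0) ∨ ∀ x ∈ D, x i ≠ 1) (s : Finset ι) (q : ι → ℝ) :
    (∫⋯∫⁻_s, D.indicator 1 ∂fun _ => endpointWeighted θ) q ≤
      (∫⋯∫⁻_s, (partialThickening r s D).indicator 1
        ∂fun _ => volume.restrict (Icc 0 1)) q := by
  induction s using Finset.induction_on generalizing q with
  | empty => simp
  | insert i s hi ih =>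
    have hN := measurable_indicator_partialThickening (r := r) hD
    have hN_le : ∀ s y, (partialThickening r s D).indicator (1 : (ι → ℝ) → ℝ≥0∞) y ≤ 1 :=
      fun s => indicator_le fun _ _ => le_rfl
    set g : ℝ → ℝ≥0∞ := fun t => (∫⋯∫⁻_s, (partialThickening r s D).indicator 1
      ∂fun _ => volume.restrict (Icc 0 1)) (update q i t)
    have hg_zero : ∀ t, (∀ x ∈ D, x i ≠ t) → g t = 0 := fun t ht => by
      by_contra hne
      obtain ⟨y, ⟨x, hx, -, hns⟩, hy⟩ := exists_apply_eq_of_lmarginal_indicator_ne_zero hi hne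
      exact ht x hx (by simpa [← hns i hi] using hy)
    rw [lmarginal_insert _ (measurable_one.indicator hD.measurableSet) hi,
      lmarginal_insert _ (hN _) hi]
    calc _ ≤ ∫⁻ t, g t ∂endpointWeighted θ := lintegral_mono fun t => ih (update q i t)
      _ ≤ _ := lintegral_endpointWeighted_le hθ0 hθ1 hθr
          (((hN s).lmarginal _).comp (measurable_update q))
          (((hN _).lmarginal _).comp (measurable_update q))
          (fun t => ne_top_of_le_ne_top ENNReal.one_ne_top (lmarginal_le_one (hN_le _) _))
          (fun t => ne_top_of_le_ne_top ENNReal.one_ne_top (lmarginal_le_one (hN_le _) _))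
          (fun t ht => hg_zero t fun x hx hxt => ht (hxt ▸ ⟨(hD01 hx).1 i, (hD01 hx).2 i⟩))
          ((hDend i).imp (hg_zero 0) (hg_zero 1))
          fun x t ht => lmarginal_partialThickening_update_le_insert hD hi ht q

lemma pi_endpointWeighted_le [Fintype ι] (hθ0 : 0 ≤ θ) (hθ1 : θ ≤ 1) (hθr : θ ≤ r)
    (hD : IsCompact D) (hD01 : D ⊆ Icc 0 1)
    (hDend : ∀ i, (∀ x ∈ D, x i ≠ 0) ∨ ∀ x ∈ D, x i ≠ 1) :
    Measure.pi (fun _ : ι => endpointWeighted θ) D ≤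
      Measure.pi (fun _ : ι => volume.restrict (Icc (0 : ℝ) 1))
        (partialThickening r .univ D) := by
  classical
  have h :=
    lmarginal_indicator_le_lmarginal_partialThickening hθ0 hθ1 hθr hD hD01 hDend .univ 0
  rwa [lmarginal_univ, lmarginal_univ, lintegral_indicator_one hD.measurableSet,
    lintegral_indicator_one (isCompact_partialThickening hD).measurableSet] at h

end Induction

lemma exists_ceil_le_encard_of_le_sum_measure {α κ : Type*} [MeasurableSpace α] [Fintype κ]
    {μ : Measure α} [IsProbabilityMeasure μ] {S : Set α} (hS : ∀ᵐ p ∂μ, p ∈ S)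
    {A : κ → Set α} (hA : ∀ n, MeasurableSet (A n)) {x : ℝ}
    (hx : ENNReal.ofReal x ≤ ∑ n, μ (A n)) :
    ∃ p ∈ S, (⌈x⌉₊ : ℕ∞) ≤ {n | p ∈ A n}.encard := by
  classical
  by_contra! h
  obtain ⟨p₀, hp₀⟩ := hS.exists
  have hceil : 0 < ⌈x⌉₊ := by exact_mod_cast pos_of_gt (h p₀ hp₀)
  have hle : ∀ p ∈ S, ∑ n, (A n).indicator (1 : α → ℝ≥0∞) p ≤ (⌈x⌉₊ - 1 : ℕ) :=
    fun p hp => by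
      have hcard := h p hp
      rw [Set.encard_eq_coe_toFinset_card, Nat.cast_lt] at hcard
      have hcount : ∑ n, (A n).indicator (1 : α → ℝ≥0∞) p = {n | p ∈ A n}.toFinset.card := by
        simp [indicator_apply, Finset.sum_boole]
      rw [hcount]
      exact_mod_cast Nat.le_sub_one_of_lt hcard
  have hlt : ((⌈x⌉₊ - 1 : ℕ) : ℝ≥0∞) < ENNReal.ofReal x :=
    (ENNReal.natCast_lt_ofReal).2 (Nat.lt_ceil.1 (by omega))
  refine (hx.trans ?_).not_gt hlt
  calc ∑ n, μ (A n) = ∫⁻ p, ∑ n, (A n).indicator 1 p ∂μ := by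
        rw [lintegral_finsetSum _ fun n _ => measurable_one.indicator (hA n)]
        simp [lintegral_indicator_one (hA _)]
    _ ≤ ∫⁻ _, ((⌈x⌉₊ - 1 : ℕ) : ℝ≥0∞) ∂μ := lintegral_mono_ae (hS.mono hle)
    _ = (⌈x⌉₊ - 1 : ℕ) := by simp

section Cover

variable {ι κ : Type*} [Fintype ι]

structure IsLebesgueCover (C : κ → Set (ι → ℝ)) : Prop where
  isClosed : ∀ n, IsClosed (C n)
  subset_iUnion : Icc 0 1 ⊆ ⋃ n, C n
  dist_ne_one : ∀ n, ∀ x ∈ Icc (0 : ι → ℝ) 1, ∀ y ∈ Icc (0 : ι → ℝ) 1,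
    x ∈ C n → y ∈ C n → dist x y ≠ 1

lemma dist_eq_one_of_apply_eq_zero_of_apply_eq_one {x y : ι → ℝ} (hx : x ∈ Icc 0 1)
    (hy : y ∈ Icc 0 1) {i : ι} (hxi : x i = 0) (hyi : y i = 1) : dist x y = 1 := by
  refine le_antisymm ((dist_pi_le_iff zero_le_one).2 fun j => ?_) ?_
  · rw [Real.dist_eq, abs_le]
    simp only [mem_Icc, Pi.le_def, Pi.zero_apply, Pi.one_apply] at hx hy
    constructor <;> linarith [hx.1 j, hx.2 j, hy.1 j, hy.2 j]
  · calc (1 : ℝ) = dist (x i) (y i) := by simp [hxi, hyi]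
      _ ≤ dist x y := dist_le_pi_dist x y i

lemma IsLebesgueCover.forall_ne_zero_or_forall_ne_one {C : κ → Set (ι → ℝ)}
    (hC : IsLebesgueCover C) (n : κ) (i : ι) :
    (∀ x ∈ C n ∩ Icc 0 1, x i ≠ 0) ∨ ∀ x ∈ C n ∩ Icc 0 1, x i ≠ 1 := by
  by_contra! h
  obtain ⟨⟨x, hx, hxi⟩, ⟨y, hy, hyi⟩⟩ := h
  exact hC.dist_ne_one n x hx.2 y hy.2 hx.1 hy.1
    (dist_eq_one_of_apply_eq_zero_of_apply_eq_one hx.2 hy.2 hxi hyi)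

theorem IsLebesgueCover.exists_ceil_le_encard_closedBall [Fintype κ] {C : κ → Set (ι → ℝ)}
    (hC : IsLebesgueCover C) (hθ0 : 0 ≤ θ) (hθ1 : θ ≤ 1) :
    ∃ p ∈ Icc (0 : ι → ℝ) 1, (⌈(1 + θ) ^ Fintype.card ι⌉₊ : ℕ∞) ≤
      {n | (Metric.closedBall p θ ∩ C n).Nonempty}.encard := by
  set D := fun n => C n ∩ Icc 0 1
  have hD : ∀ n, IsCompact (D n) := fun n => isCompact_Icc.inter_left (hC.isClosed n)
  set cubeVolume := Measure.pi fun _ : ι => volume.restrict (Icc (0 : ℝ) 1)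
  have hcube : ∀ᵐ p ∂cubeVolume, p ∈ Icc (0 : ι → ℝ) 1 :=
    (mem_ae_iff_prob_eq_one measurableSet_Icc).2
      (by simp [cubeVolume, ← pi_univ_Icc, Measure.pi_pi])
  have hsum : ENNReal.ofReal ((1 + θ) ^ Fintype.card ι) ≤
      ∑ n, cubeVolume (partialThickening θ .univ (D n)) :=
    calc ENNReal.ofReal ((1 + θ) ^ Fintype.card ι)
        = Measure.pi (fun _ : ι => endpointWeighted θ) (Icc 0 1) := by
          simp [← pi_univ_Icc, Measure.pi_pi, endpointWeighted_Icc hθ0 hθ1,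
            ENNReal.ofReal_pow (by linarith : (0 : ℝ) ≤ 1 + θ)]
      _ ≤ Measure.pi (fun _ : ι => endpointWeighted θ) (⋃ n, D n) :=
          measure_mono fun x hx =>
            mem_iUnion.2 ((mem_iUnion.1 (hC.subset_iUnion hx)).imp fun n hn => ⟨hn, hx⟩)
      _ ≤ ∑ n, Measure.pi (fun _ : ι => endpointWeighted θ) (D n) :=
          measure_iUnion_fintype_le _ _
      _ ≤ ∑ n, cubeVolume (partialThickening θ .univ (D n)) := Finset.sum_le_sum fun n _ =>
          pi_endpointWeighted_le hθ0 hθ1 le_rfl (hD n) inter_subset_right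
            (hC.forall_ne_zero_or_forall_ne_one n)
  obtain ⟨p, hp, hcount⟩ := exists_ceil_le_encard_of_le_sum_measure hcube
    (fun n => (isCompact_partialThickening (hD n)).measurableSet) hsum
  refine ⟨p, hp, hcount.trans (encard_mono fun n ⟨x, hx, hpx, _⟩ => ⟨x, ?_, hx.1⟩)⟩
  rw [Metric.mem_closedBall, dist_comm, dist_pi_le_iff hθ0]
  exact fun i => (Real.dist_eq _ _).trans_le (hpx i (Finset.mem_univ i))

end Cover

end NeighborhoodLebesgue

open NeighborhoodLebesgue in
theorem neighborhood_lebesgue_general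
    (d N : ℕ) (C : Fin N → Set (Fin d → ℝ))
    (hclosed : ∀ n, IsClosed (C n))
    (hcover : Set.Icc (0 : Fin d → ℝ) 1 ⊆ ⋃ n, C n)
    (hopp : ∀ n, ∀ x ∈ Set.Icc (0 : Fin d → ℝ) 1, ∀ y ∈ Set.Icc (0 : Fin d → ℝ) 1,
      x ∈ C n → y ∈ C n → dist x y ≠ 1)
    (ε : ℝ) (hε : 0 < ε) :
    ∃ p ∈ Set.Icc (0 : Fin d → ℝ) 1,
      (⌈(1 + ε / (1 + ε)) ^ d⌉₊ : ℕ∞) ≤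
        {n : Fin N | (Metric.ball p ε ∩ C n).Nonempty}.encard := by
  have hθε : ε / (1 + ε) < ε := div_lt_self hε (by linarith)
  obtain ⟨p, hp, hcount⟩ := IsLebesgueCover.exists_ceil_le_encard_closedBall
    ⟨hclosed, hcover, hopp⟩ (θ := ε / (1 + ε)) (by positivity)
    (div_le_one_of_le₀ (by linarith) (by positivity))
  rw [Fintype.card_fin] at hcount
  exact ⟨p, hp, hcount.trans (encard_mono fun n ⟨x, hx, hxC⟩ =>
    ⟨x, Metric.closedBall_subset_ball hθε hx, hxC⟩)⟩

/-- **Neighborhood Lebesgue Theorem.** Given a Lebesgue cover of `[0,1]^d` (a finite family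
of closed sets covering the cube, none containing two points of the cube at `ℓ∞` distance `1`),
for any `ε > 0` there is a point `p` of the cube whose open `ℓ∞` `ε`-ball intersects at least
`⌈(1 + ε/(1+ε))^d⌉` sets of the cover. -/
theorem neighborhood_lebesgue
    (d N : ℕ) (hd : 1 ≤ d) (C : Fin N → Set (Fin d → ℝ))
    (hclosed : ∀ n, IsClosed (C n))
    (hcover : Set.Icc (0 : Fin d → ℝ) 1 ⊆ ⋃ n, C n)
    (hopp : ∀ n, ∀ x ∈ Set.Icc (0 : Fin d → ℝ) 1, ∀ y ∈ Set.Icc (0 : Fin d → ℝ) 1,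
      x ∈ C n → y ∈ C n → dist x y ≠ 1)
    (ε : ℝ) (hε : 0 < ε) :
    ∃ p ∈ Set.Icc (0 : Fin d → ℝ) 1,
      (⌈(1 + ε / (1 + ε)) ^ d⌉₊ : ℕ∞) ≤
        {n : Fin N | (Metric.ball p ε ∩ C n).Nonempty}.encard :=
  neighborhood_lebesgue_general d N C hclosed hcover hopp ε hε
end
end

section
/- For every dimension d ≥ 1, every KKM cover {C_v}_{v∈{0,1}^d} of [0,1]^d, and every ε > 0, there exists a point p ∈ [0,1]^d such that the open ℓ∞ ball of radius ε centered at p intersects at least ⌈(1 + ε/(1+ε))^d⌉ of the sets C_v, i.e. |{v ∈ {0,1}^d : B°_∞(ε, p) ∩ C_v ≠ ∅}| ≥ ⌈(1 + ε/(1+ε))^d⌉. -/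
/-- A face of the cube `[0,1]^d`: a product `∏ᵢ Fᵢ` where each `Fᵢ` is `{0}`, `{1}`, or `[0,1]`. -/
def IsFace (d : ℕ) (F : Set (Fin d → ℝ)) : Prop :=
  ∃ s : Fin d → Set ℝ,
    (∀ i, s i = {0} ∨ s i = {1} ∨ s i = Set.Icc 0 1) ∧ F = Set.univ.pi s

/-- The vertex set `{0,1}^d` of the cube. -/
def cubeVertices (d : ℕ) : Set (Fin d → ℝ) :=
  Set.univ.pi fun _ => ({0, 1} : Set ℝ)

lemma mem_cubeVertices_iff {d : ℕ} {v : Fin d → ℝ} :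
    v ∈ cubeVertices d ↔ ∀ i, v i = 0 ∨ v i = 1 := by
  simp [cubeVertices]

noncomputable def vertB (d : ℕ) (b : Fin d → Bool) : Fin d → ℝ := fun i => if b i then 1 else 0

lemma vertB_mem (d : ℕ) (b : Fin d → Bool) : vertB d b ∈ cubeVertices d := by
  rw [mem_cubeVertices_iff]
  intro i
  by_cases h : b i <;> simp [vertB, h]

lemma vertB_inj (d : ℕ) : Function.Injective (vertB d) := by
  intro a b h
  funext i
  have := congrFun h i
  by_cases ha : a i <;> by_cases hb : b i <;> simp_all [vertB]

lemma exists_vertB {d : ℕ} {v : Fin d → ℝ} (hv : v ∈ cubeVertices d) :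
    ∃ b, vertB d b = v := by
  classical
  refine ⟨fun i => if v i = 1 then true else false, funext fun i => ?_⟩
  rcases mem_cubeVertices_iff.1 hv i with h | h <;> simp [vertB, h]

lemma key {d : ℕ} {C : (Fin d → ℝ) → Set (Fin d → ℝ)}
    (hKKM : ∀ F : Set (Fin d → ℝ), IsFace d F → F ⊆ ⋃ v ∈ F ∩ cubeVertices d, C v)
    {t : ℝ} (ht0 : 0 < t) (ht1 : t ≤ 1) {z : Fin d → ℝ}
    (hz0 : ∀ i, 0 ≤ z i) (hz1 : ∀ i, z i ≤ 1 + t) :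
    ∃ v ∈ cubeVertices d, (∀ i, 0 ≤ z i - t * v i ∧ z i - t * v i ≤ 1) ∧
      ∃ x ∈ C v, ∀ i, |z i - t * v i - x i| ≤ t := by
  classical
  set s : Fin d → Set ℝ :=
    fun i => if z i < t then {0} else if 1 < z i then {1} else Set.Icc 0 1 with hs
  set x : Fin d → ℝ := fun i => if z i < t then 0 else if 1 < z i then 1 else z i with hx
  have hface : IsFace d (Set.univ.pi s) :=
    ⟨s, fun i => by by_cases h1 : z i < t <;> by_cases h2 : 1 < z i <;> simp [hs, h1, h2], rfl⟩
  have hxF : x ∈ Set.univ.pi s := by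
    intro i _
    by_cases h1 : z i < t
    · simp [hs, hx, h1]
    · by_cases h2 : 1 < z i
      · simp [hs, hx, h1, h2]
      · simp only [hs, hx, if_neg h1, if_neg h2]
        exact Set.mem_Icc.2 ⟨hz0 i, le_of_not_gt h2⟩
  rcases Set.mem_iUnion₂.1 (hKKM _ hface hxF) with ⟨v, hv, hxC⟩
  have hvs : ∀ i, v i ∈ s i := fun i => hv.1 i (Set.mem_univ i)
  have hvert := hv.2
  have hcoord : ∀ i, (0 ≤ z i - t * v i ∧ z i - t * v i ≤ 1) ∧ |z i - t * v i - x i| ≤ t := by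
    intro i
    by_cases h1 : z i < t
    · have hv0 : v i = 0 := by simpa [hs, h1] using hvs i
      have hx0 : x i = 0 := by simp [hx, h1]
      rw [hv0, hx0]
      have := hz0 i
      constructor
      · constructor <;> [linarith; linarith]
      · rw [abs_le]; constructor <;> linarith
    · by_cases h2 : 1 < z i
      · have hv1 : v i = 1 := by simpa [hs, h1, h2] using hvs i
        have hx1 : x i = 1 := by simp [hx, h1, h2]
        rw [hv1, hx1]
        have := hz1 i
        constructor
        · constructor <;> [linarith; linarith]
        · rw [abs_le]; constructor <;> linarith
      · have hxz : x i = z i := by simp [hx, h1, h2]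
        have hti : t ≤ z i := le_of_not_gt h1
        have hzi : z i ≤ 1 := le_of_not_gt h2
        rw [hxz]
        rcases mem_cubeVertices_iff.1 hvert i with hv0 | hv1
        · rw [hv0]
          constructor
          · constructor <;> linarith
          · rw [abs_le]; constructor <;> linarith
        · rw [hv1]
          constructor
          · constructor <;> linarith
          · rw [abs_le]; constructor <;> linarith
  exact ⟨v, hvert, fun i => (hcoord i).1, x, hxC, fun i => (hcoord i).2⟩

open Set MeasureTheory Metric Pointwise
open scoped ENNReal

/-- **Neighborhood KKM Theorem.** Given a KKM cover of `[0,1]^d` (closed sets indexed by the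
vertices, with each face `F` covered by the sets of the vertices of `F`), for any `ε > 0`
there is a point `p` of the cube whose open `ℓ∞` `ε`-ball intersects at least
`⌈(1 + ε/(1+ε))^d⌉` sets of the cover. -/
theorem neighborhood_kkm
    (d : ℕ) (hd : 1 ≤ d) (C : (Fin d → ℝ) → Set (Fin d → ℝ))
    (hclosed : ∀ v ∈ cubeVertices d, IsClosed (C v))
    (hKKM : ∀ F : Set (Fin d → ℝ), IsFace d F → F ⊆ ⋃ v ∈ F ∩ cubeVertices d, C v)
    (ε : ℝ) (hε : 0 < ε) :
    ∃ p ∈ Set.Icc (0 : Fin d → ℝ) 1,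
      (⌈(1 + ε / (1 + ε)) ^ d⌉₊ : ℕ∞) ≤
        {v | v ∈ cubeVertices d ∧ (Metric.ball p ε ∩ C v).Nonempty}.encard := by
  classical
  set t : ℝ := ε / (1 + ε) with htdef
  have h1ε : (0:ℝ) < 1 + ε := by linarith
  have ht0 : 0 < t := div_pos hε h1ε
  have ht1 : t < 1 := by rw [div_lt_one h1ε]; linarith
  have htε : t < ε := div_lt_self hε (by linarith)
  set k : ℕ := ⌈(1 + t) ^ d⌉₊ with hkdef
  have hk1 : 1 ≤ k := Nat.one_le_iff_ne_zero.2 (by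
    simp only [hkdef, ne_eq, Nat.ceil_eq_zero, not_le]
    positivity)
  -- the thickened sets
  set M : (Fin d → Bool) → Set (Fin d → ℝ) :=
    fun b => Set.Icc 0 1 ∩ Metric.cthickening t (C (vertB d b)) with hM
  have hMmeas : ∀ b, MeasurableSet (M b) := fun b =>
    measurableSet_Icc.inter (Metric.isClosed_cthickening).measurableSet
  have hMsub : ∀ b, M b ⊆ Set.Icc 0 1 := fun b => Set.inter_subset_left
  -- covering claim
  have hcover : Set.Icc (0 : Fin d → ℝ) (fun _ => 1 + t) ⊆
      ⋃ b ∈ (Finset.univ : Finset (Fin d → Bool)), (t • vertB d b) +ᵥ M b := by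
    intro z hz
    rw [Set.mem_Icc] at hz
    obtain ⟨v, hvert, hbox, x, hxC, hdist⟩ :=
      key hKKM ht0 ht1.le (fun i => hz.1 i) (fun i => hz.2 i)
    obtain ⟨b, rfl⟩ := exists_vertB hvert
    refine Set.mem_biUnion (Finset.mem_univ b) ?_
    rw [Set.mem_vadd_set_iff_neg_vadd_mem]
    have hzv : (-(t • vertB d b) +ᵥ z) = z - t • vertB d b := by
      funext i; simp [vadd_eq_add]; ring
    rw [hzv]
    constructor
    · rw [Set.mem_Icc]
      constructor <;> intro i <;>
        · have := hbox i
          simp only [Pi.sub_apply, Pi.smul_apply, smul_eq_mul, Pi.zero_apply, Pi.one_apply]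
          linarith [this.1, this.2]
    · apply Metric.mem_cthickening_of_dist_le _ x t _ hxC
      rw [dist_pi_le_iff ht0.le]
      intro i
      have := hdist i
      simp only [Pi.sub_apply, Pi.smul_apply, smul_eq_mul, Real.dist_eq]
      have h2 : z i - t * vertB d b i - x i = z i - (x i + t * vertB d b i) := by ring
      rw [h2] at this
      convert this using 2 <;> ring
  -- measure computations
  have hvol_big : volume (Set.Icc (0 : Fin d → ℝ) (fun _ => 1 + t)) =
      ENNReal.ofReal ((1 + t) ^ d) := by
    rw [Real.volume_Icc_pi]
    simp [ENNReal.ofReal_pow (by positivity : (0:ℝ) ≤ 1 + t)]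
  have hvol_cube : volume (Set.Icc (0 : Fin d → ℝ) 1) = 1 := by
    rw [Real.volume_Icc_pi]
    simp
  by_contra hcon
  push_neg at hcon
  -- pointwise count bound
  have hcount : ∀ p : Fin d → ℝ,
      ((Finset.univ.filter fun b => p ∈ M b).card : ℕ) ≤ k - 1 := by
    intro p
    by_cases hp : p ∈ Set.Icc (0 : Fin d → ℝ) 1
    · have hsub : vertB d '' ↑(Finset.univ.filter fun b => p ∈ M b) ⊆
          {v | v ∈ cubeVertices d ∧ (Metric.ball p ε ∩ C v).Nonempty} := by
        rintro _ ⟨b, hb, rfl⟩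
        simp only [Finset.coe_filter, Set.mem_setOf_eq] at hb
        refine ⟨vertB_mem d b, ?_⟩
        have hthick : p ∈ Metric.thickening ε (C (vertB d b)) :=
          Metric.cthickening_subset_thickening' hε htε _ hb.2.2
        rw [Metric.mem_thickening_iff] at hthick
        obtain ⟨y, hyC, hyd⟩ := hthick
        exact ⟨y, Metric.mem_ball.2 (by rwa [dist_comm]), hyC⟩
      have hlt : (((Finset.univ.filter fun b => p ∈ M b).card : ℕ∞)) < (k : ℕ∞) := by
        calc ((Finset.univ.filter fun b => p ∈ M b).card : ℕ∞)
            = (↑(Finset.univ.filter fun b => p ∈ M b) : Set (Fin d → Bool)).encard := by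
              rw [Set.encard_coe_eq_coe_finsetCard]
          _ = (vertB d '' ↑(Finset.univ.filter fun b => p ∈ M b)).encard := by
              rw [Set.InjOn.encard_image ((vertB_inj d).injOn)]
          _ ≤ {v | v ∈ cubeVertices d ∧ (Metric.ball p ε ∩ C v).Nonempty}.encard :=
              Set.encard_le_encard hsub
          _ < (k : ℕ∞) := hcon p hp
      exact Nat.le_sub_one_of_lt (by exact_mod_cast hlt)
    · have : (Finset.univ.filter fun b => p ∈ M b) = ∅ := by
        apply Finset.filter_eq_empty_iff.2
        intro b _ hpb
        exact hp (hMsub b hpb)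
      simp [this]
  -- sum of measures
  set μ : Measure (Fin d → ℝ) := volume.restrict (Set.Icc (0 : Fin d → ℝ) 1) with hμ
  have hsum_eq : ∑ b : Fin d → Bool, volume (M b) = ∑ b : Fin d → Bool, μ (M b) := by
    refine Finset.sum_congr rfl fun b _ => ?_
    rw [hμ, Measure.restrict_apply (hMmeas b), Set.inter_eq_self_of_subset_left (hMsub b)]
  have hbound : ∑ b : Fin d → Bool, μ (M b) ≤ (k - 1 : ℕ) := by
    have hint : ∑ b : Fin d → Bool, μ (M b) =
        ∫⁻ p, ∑ b : Fin d → Bool, (M b).indicator 1 p ∂μ := by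
      rw [MeasureTheory.lintegral_finset_sum]
      · exact Finset.sum_congr rfl fun b _ => (lintegral_indicator_one (hMmeas b)).symm
      · exact fun b _ => measurable_const.indicator (hMmeas b)
    rw [hint]
    have hpt : ∀ p, ∑ b : Fin d → Bool, (M b).indicator (1 : (Fin d → ℝ) → ℝ≥0∞) p ≤
        ((k - 1 : ℕ) : ℝ≥0∞) := by
      intro p
      have : ∑ b : Fin d → Bool, (M b).indicator (1 : (Fin d → ℝ) → ℝ≥0∞) p =
          ((Finset.univ.filter fun b => p ∈ M b).card : ℝ≥0∞) := by
        rw [Finset.card_filter]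
        push_cast
        refine Finset.sum_congr rfl fun b _ => ?_
        by_cases hb : p ∈ M b <;> simp [Set.indicator_apply, hb]
      rw [this]
      exact_mod_cast Nat.cast_le.2 (hcount p)
    calc ∫⁻ p, ∑ b : Fin d → Bool, (M b).indicator 1 p ∂μ
        ≤ ∫⁻ _, ((k - 1 : ℕ) : ℝ≥0∞) ∂μ := lintegral_mono hpt
      _ = ((k - 1 : ℕ) : ℝ≥0∞) * μ Set.univ := lintegral_const _
      _ = ((k - 1 : ℕ) : ℝ≥0∞) := by
          rw [hμ, Measure.restrict_apply_univ, hvol_cube, mul_one]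
  have hlower : ENNReal.ofReal ((1 + t) ^ d) ≤ ∑ b : Fin d → Bool, volume (M b) := by
    calc ENNReal.ofReal ((1 + t) ^ d)
        = volume (Set.Icc (0 : Fin d → ℝ) (fun _ => 1 + t)) := hvol_big.symm
      _ ≤ volume (⋃ b ∈ (Finset.univ : Finset (Fin d → Bool)), (t • vertB d b) +ᵥ M b) :=
          measure_mono hcover
      _ ≤ ∑ b : Fin d → Bool, volume ((t • vertB d b) +ᵥ M b) :=
          measure_biUnion_finset_le _ _
      _ = ∑ b : Fin d → Bool, volume (M b) := by
          refine Finset.sum_congr rfl fun b _ => ?_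
          exact measure_vadd _ _ _
  -- final contradiction
  have hfin : ((k - 1 : ℕ) : ℝ≥0∞) < ENNReal.ofReal ((1 + t) ^ d) := by
    rw [← ENNReal.ofReal_natCast]
    rw [ENNReal.ofReal_lt_ofReal_iff (by positivity)]
    have h1 : ((k : ℝ)) < (1 + t) ^ d + 1 := Nat.ceil_lt_add_one (by positivity)
    have h2 : ((k - 1 : ℕ) : ℝ) = (k : ℝ) - 1 := by
      rw [Nat.cast_sub hk1]; simp
    linarith
  exact absurd (hlower.trans (hsum_eq ▸ hbound)) (not_le.2 hfin)
end

section
/- Let d ≥ 1, let ρ ∈ [0,∞), let Λ ⊆ [0,1]^d be ρ-proximate, and set ρ' = min(ρ, 1/2). Then for every SLKKM coloring χ : Λ → C and every ε > 0, there exists a point p ∈ [0,1]^d such that the open ℓ∞ ball of radius ε centered at p contains points of Λ of at least ⌈(1 + (ε−ρ')/(1+(ε−ρ')))^d⌉ different colors, i.e. |{c ∈ C : χ⁻¹(c) ∩ B°_∞(ε, p) ≠ ∅}| ≥ ⌈(1 + (ε−ρ')/(1+(ε−ρ')))^d⌉. -/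
/-- `Λ ⊆ [0,1]^d` is `ρ`-proximate: for every face `F` and every `x ∈ F` there is
`y ∈ F ∩ Λ` with `‖x − y‖_∞ ≤ ρ`. -/
def IsProximate (d : ℕ) (ρ : ℝ) (Λ : Set (Fin d → ℝ)) : Prop :=
  ∀ F : Set (Fin d → ℝ), IsFace d F → ∀ x ∈ F, ∃ y ∈ F ∩ Λ, dist x y ≤ ρ

/-!
Fix `0 < a < ε - ρ` and pass to a finite subset of `Λ` that is `r`-proximate for some `r` with
`ρ < r < ε - a`. Project a point `x` of the enlarged cube `Q = [-a, 1 + a]^d` coordinatewise to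
`[0, 1]^d`; the projection lies on the face of the cube selected by the coordinates of `x` below
`0` or above `1`, so it is `r`-close to a point of `Λ` on that face, and the color of that point
puts `x` into a color region. Two points of one color never lie on opposite faces, so no color
region reaches both below `xᵢ = 0` and above `xᵢ = 1`: it fits into `[-a, 1]` or `[0, 1 + a]` in
every coordinate, and the dilation by `β = 1 + a / (1 + a)` about the matching corner of `Q` keeps
it inside `Q` while moving points by at most `a` away from their projections. The dilated regions
cover `Q` with total volume `β ^ d` times its volume, so some point `z` lies in more than
`β ^ d - 1` of them, and the projection of `z` is `(a + r)`-close to points of that many colors.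
For `ε > 1 / 2` the `2 ^ d` vertices of the cube, which lie in `Λ` and have pairwise distinct
colors, are all in the ball about the center.
-/

open Set Metric MeasureTheory
open scoped Finset ENNReal

theorem Set.setOf_nonempty_inter_preimage_singleton_inter {α β : Type*} (f : α → β)
    (s t : Set α) : {b | (s ∩ f ⁻¹' {b} ∩ t).Nonempty} = f '' (s ∩ t) := by
  ext b
  constructor
  · rintro ⟨x, ⟨hxs, rfl⟩, hxt⟩
    exact ⟨x, ⟨hxs, hxt⟩, rfl⟩
  · rintro ⟨x, ⟨hxs, hxt⟩, rfl⟩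
    exact ⟨x, ⟨hxs, rfl⟩, hxt⟩

open scoped Classical in
theorem MeasureTheory.exists_lt_card_filter_mem_of_mul_lt_sum {α ι : Type*} [MeasurableSpace α]
    (μ : Measure α) {Q : Set α} {K : Finset ι} {S : ι → Set α}
    (hS : ∀ c ∈ K, MeasurableSet (S c)) (hSQ : ∀ c ∈ K, S c ⊆ Q) {k : ℕ}
    (h : k * μ Q < ∑ c ∈ K, μ (S c)) : ∃ z, k < #{c ∈ K | z ∈ S c} := by
  by_contra! hle
  refine h.not_ge ?_
  calc ∑ c ∈ K, μ (S c) = ∑ c ∈ K, ∫⁻ z in Q, (S c).indicator 1 z ∂μ := by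
        refine Finset.sum_congr rfl fun c hc => ?_
        rw [lintegral_indicator_one (hS c hc), Measure.restrict_apply (hS c hc),
          inter_eq_self_of_subset_left (hSQ c hc)]
    _ = ∫⁻ z in Q, (#{c ∈ K | z ∈ S c} : ℝ≥0∞) ∂μ := by
        rw [← lintegral_finsetSum' K fun c hc => (measurable_one.indicator (hS c hc)).aemeasurable]
        congr 1; ext z
        simp [Set.indicator_apply, Finset.sum_boole]
    _ ≤ ∫⁻ _ in Q, (k : ℝ≥0∞) ∂μ := lintegral_mono fun z => Nat.cast_le.mpr (hle z)
    _ = k * μ Q := by rw [setLIntegral_const]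

section homothety

variable {E : Type*} [NormedAddCommGroup E] [NormedSpace ℝ E] [MeasurableSpace E] [BorelSpace E]
  [FiniteDimensional ℝ E]

theorem MeasurableSet.image_homothety {A : Set E} (hA : MeasurableSet A) (w : E) {β : ℝ}
    (hβ : β ≠ 0) : MeasurableSet (AffineMap.homothety w β '' A) := by
  have h : ⇑(AffineMap.homothety w β) = AffineEquiv.homothetyUnitsMulHom w (Units.mk0 β hβ) := by
    rw [AffineEquiv.coe_homothetyUnitsMulHom_apply]; rfl
  rw [h]
  exact hA.image_of_continuousOn_injOn (AffineEquiv.continuous_of_finiteDimensional _).continuousOn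
    (AffineEquiv.injective _).injOn

open scoped Classical in
theorem MeasureTheory.Measure.exists_lt_card_filter_mem_image_homothety {ι : Type*}
    (μ : Measure E) [μ.IsAddHaarMeasure] {Q : Set E} (hQ₀ : μ Q ≠ 0)
    (hQ : μ Q ≠ ∞) {K : Finset ι} {A : ι → Set E} (hA : ∀ c ∈ K, MeasurableSet (A c))
    (hcover : Q ⊆ ⋃ c ∈ K, A c) (w : ι → E) {β : ℝ} (hβ : 0 < β)
    (hmaps : ∀ c ∈ K, AffineMap.homothety (w c) β '' A c ⊆ Q) {k : ℕ}
    (hk : k < β ^ Module.finrank ℝ E) :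
    ∃ z, k < #{c ∈ K | z ∈ AffineMap.homothety (w c) β '' A c} := by
  refine exists_lt_card_filter_mem_of_mul_lt_sum μ
    (fun c hc => (hA c hc).image_homothety (w c) hβ.ne') hmaps ?_
  have hk' : (k : ℝ≥0∞) < ENNReal.ofReal (β ^ Module.finrank ℝ E) := by
    rwa [← ENNReal.ofReal_natCast, ENNReal.ofReal_lt_ofReal_iff (by positivity)]
  calc (k : ℝ≥0∞) * μ Q < ENNReal.ofReal (β ^ Module.finrank ℝ E) * μ Q :=
        ENNReal.mul_lt_mul_left hQ₀ hQ hk'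
    _ ≤ ENNReal.ofReal (β ^ Module.finrank ℝ E) * ∑ c ∈ K, μ (A c) :=
        mul_le_mul_right ((measure_mono hcover).trans (measure_biUnion_finset_le K A)) _
    _ = ∑ c ∈ K, μ (AffineMap.homothety (w c) β '' A c) := by
        simp only [Measure.addHaar_image_homothety, abs_of_pos (pow_pos hβ _), Finset.mul_sum]

end homothety

noncomputable def clampCube {ι : Type*} (x : ι → ℝ) : ι → ℝ :=
  fun i => projIcc 0 1 zero_le_one (x i)

section cube

variable {ι : Type*}

theorem clampCube_mem_Icc (x : ι → ℝ) : clampCube x ∈ Icc 0 1 :=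
  ⟨fun i => (projIcc 0 1 zero_le_one (x i)).2.1, fun i => (projIcc 0 1 zero_le_one (x i)).2.2⟩

theorem continuous_clampCube : Continuous (clampCube : (ι → ℝ) → ι → ℝ) :=
  continuous_pi fun i => continuous_subtype_val.comp (continuous_projIcc.comp (continuous_apply i))

variable [Fintype ι]

theorem dist_clampCube_le (x : ι → ℝ) {y : ι → ℝ} (hy : y ∈ Icc 0 1) :
    dist (clampCube x) y ≤ dist x y := by
  refine (dist_pi_le_iff dist_nonneg).2 fun i => ?_
  have hyi : (projIcc (0 : ℝ) 1 zero_le_one (y i) : ℝ) = y i :=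
    congrArg Subtype.val (projIcc_of_mem zero_le_one (⟨hy.1 i, hy.2 i⟩ : y i ∈ Icc (0 : ℝ) 1))
  calc dist (clampCube x i) (y i) = |clampCube x i - projIcc 0 1 zero_le_one (y i)| := by
        rw [hyi, Real.dist_eq]
    _ ≤ |x i - y i| := abs_projIcc_sub_projIcc zero_le_one
    _ ≤ dist x y := dist_le_pi_dist x y i

theorem dist_eq_one_of_apply_eq_one_of_apply_eq_zero {y y' : ι → ℝ} (hy : y ∈ Icc 0 1)
    (hy' : y' ∈ Icc 0 1) {i : ι} (h₁ : y i = 1) (h₀ : y' i = 0) : dist y y' = 1 := by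
  refine le_antisymm ((dist_pi_le_iff zero_le_one).2 fun j => ?_) ?_
  · rw [Real.dist_eq, abs_le]
    have := hy.1 j; have := hy.2 j; have := hy'.1 j; have := hy'.2 j
    simp only [Pi.zero_apply, Pi.one_apply] at *
    constructor <;> linarith
  · simpa [h₁, h₀, Real.dist_eq] using dist_le_pi_dist y y' i

end cube

theorem homothety_mem_Icc_and_abs_sub_projIcc_le {a β w t : ℝ} (ha : 0 < a)
    (hβ : β * (1 + a) = 1 + 2 * a)
    (ht : (w = -a ∧ t ∈ Icc (-a) 1) ∨ (w = 1 + a ∧ t ∈ Icc 0 (1 + a))) :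
    AffineMap.homothety w β t ∈ Icc (-a) (1 + a) ∧
      |AffineMap.homothety w β t - projIcc 0 1 zero_le_one t| ≤ a := by
  have hβ₁ : 1 ≤ β := by nlinarith
  have hβ₂ : β ≤ 2 := by nlinarith
  rw [AffineMap.homothety_apply, vsub_eq_sub, vadd_eq_add, smul_eq_mul, mem_Icc, abs_le]
  rcases ht with ⟨rfl, ht₀, ht₁⟩ | ⟨rfl, ht₀, ht₁⟩
  · rcases le_total t 0 with h | h
    · rw [projIcc_of_le_left _ h]
      refine ⟨⟨?_, ?_⟩, ?_, ?_⟩ <;> nlinarith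
    · rw [projIcc_of_mem _ ⟨h, ht₁⟩]
      refine ⟨⟨?_, ?_⟩, ?_, ?_⟩ <;> nlinarith
  · rcases le_total 1 t with h | h
    · rw [projIcc_of_right_le _ h]
      refine ⟨⟨?_, ?_⟩, ?_, ?_⟩ <;> nlinarith
    · rw [projIcc_of_mem _ ⟨ht₀, h⟩]
      refine ⟨⟨?_, ?_⟩, ?_, ?_⟩ <;> nlinarith

theorem homothety_mem_Icc_and_dist_clampCube_le {ι : Type*} [Fintype ι] {a β : ℝ}
    {w x : ι → ℝ} (ha : 0 < a) (hβ : β * (1 + a) = 1 + 2 * a)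
    (hx : ∀ i, (w i = -a ∧ x i ∈ Icc (-a) 1) ∨ (w i = 1 + a ∧ x i ∈ Icc 0 (1 + a))) :
    AffineMap.homothety w β x ∈ Icc (fun _ => -a) (fun _ => 1 + a) ∧
      dist (AffineMap.homothety w β x) (clampCube x) ≤ a := by
  have hcoord (i : ι) : AffineMap.homothety w β x i = AffineMap.homothety (w i) β (x i) := by
    simp [AffineMap.homothety_apply]
  refine ⟨⟨fun i => ?_, fun i => ?_⟩, (dist_pi_le_iff ha.le).2 fun i => ?_⟩
  · exact hcoord i ▸ (homothety_mem_Icc_and_abs_sub_projIcc_le ha hβ (hx i)).1.1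
  · exact hcoord i ▸ (homothety_mem_Icc_and_abs_sub_projIcc_le ha hβ (hx i)).1.2
  · rw [Real.dist_eq, hcoord]
    exact (homothety_mem_Icc_and_abs_sub_projIcc_le ha hβ (hx i)).2

theorem IsFace.isCompact {d : ℕ} {F : Set (Fin d → ℝ)} (hF : IsFace d F) : IsCompact F := by
  obtain ⟨s, hs, rfl⟩ := hF
  refine isCompact_univ_pi fun i => ?_
  rcases hs i with h | h | h <;> rw [h]
  exacts [isCompact_singleton, isCompact_singleton, isCompact_Icc]

theorem finite_setOf_isFace (d : ℕ) : {F | IsFace d F}.Finite := by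
  refine ((Set.Finite.pi fun _ => toFinite ({{0}, {1}, Icc 0 1} : Set (Set ℝ))).image
    (univ.pi ·)).subset ?_
  rintro F ⟨s, hs, rfl⟩
  exact ⟨s, fun i _ => hs i, rfl⟩

def cubeFace {d : ℕ} (x : Fin d → ℝ) : Set (Fin d → ℝ) :=
  univ.pi fun i => if x i < 0 then {0} else if 1 < x i then {1} else Icc 0 1

section cubeFace

variable {d : ℕ} {x y : Fin d → ℝ}

theorem isFace_cubeFace (x : Fin d → ℝ) : IsFace d (cubeFace x) :=
  ⟨_, fun i => by split_ifs <;> simp, rfl⟩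

theorem clampCube_mem_cubeFace (x : Fin d → ℝ) : clampCube x ∈ cubeFace x := by
  intro i _
  simp only [clampCube]
  split_ifs with h₀ h₁
  · rw [projIcc_of_le_left _ h₀.le]; rfl
  · rw [projIcc_of_right_le _ h₁.le]; rfl
  · exact Subtype.prop _

theorem apply_eq_zero_of_mem_cubeFace (hy : y ∈ cubeFace x) {i : Fin d} (hi : x i < 0) :
    y i = 0 := by
  simpa [hi] using hy i (mem_univ i)

theorem apply_eq_one_of_mem_cubeFace (hy : y ∈ cubeFace x) {i : Fin d} (hi : 1 < x i) :
    y i = 1 := by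
  simpa [hi, hi.le.not_gt, (zero_lt_one.trans hi).not_gt] using hy i (mem_univ i)

theorem measurableSet_setOf_mem_cubeFace (y : Fin d → ℝ) :
    MeasurableSet {x : Fin d → ℝ | y ∈ cubeFace x} := by
  simp only [cubeFace, mem_univ_pi, ofPred_forall]
  refine MeasurableSet.iInter fun i => measurableSet_setOfPred.2 ?_
  simp only [apply_ite (y i ∈ ·)]
  exact .ite (measurableSet_lt (measurable_pi_apply i) measurable_const) measurable_const <|
    .ite (measurableSet_lt measurable_const (measurable_pi_apply i)) measurable_const
      measurable_const

end cubeFace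

section proximate

variable {d : ℕ} {ρ : ℝ} {Λ : Set (Fin d → ℝ)}

theorem IsProximate.exists_finset_subset_isProximate (h : IsProximate d ρ Λ) {r : ℝ}
    (hr : ρ < r) :
    ∃ Y : Finset (Fin d → ℝ), ↑Y ⊆ Λ ∧ IsProximate d r Y := by
  have hnet : ∀ F, IsFace d F → ∃ N ⊆ F ∩ Λ, N.Finite ∧ F ⊆ ⋃ y ∈ N, ball y r := by
    intro F hF
    refine hF.isCompact.elim_finite_subcover_image (fun _ _ => isOpen_ball) fun x hx => ?_
    obtain ⟨y, hy, hxy⟩ := h F hF x hx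
    exact mem_biUnion hy (mem_ball.2 (hxy.trans_lt hr))
  choose! N hNsub hNfin hNcover using hnet
  obtain ⟨Y, hY⟩ := ((finite_setOf_isFace d).biUnion hNfin).exists_finset_coe
  refine ⟨Y, hY ▸ iUnion₂_subset fun F hF => (hNsub F hF).trans inter_subset_right,
    fun F hF x hx => ?_⟩
  obtain ⟨y, hyN, hxy⟩ := mem_iUnion₂.1 (hNcover F hF hx)
  exact ⟨y, ⟨(hNsub F hF hyN).1, hY ▸ mem_biUnion hF hyN⟩, (mem_ball.1 hxy).le⟩

theorem IsProximate.mem_of_forall_eq_zero_or_one (h : IsProximate d ρ Λ) {v : Fin d → ℝ}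
    (hv : ∀ i, v i = 0 ∨ v i = 1) : v ∈ Λ := by
  have hface : IsFace d (univ.pi fun i => {v i}) :=
    ⟨_, fun i => (hv i).elim (fun h => Or.inl (h ▸ rfl)) (fun h => Or.inr (Or.inl (h ▸ rfl))), rfl⟩
  obtain ⟨y, ⟨hyv, hyΛ⟩, -⟩ := h _ hface v fun i _ => rfl
  rwa [← show y = v from funext fun i => hyv i (mem_univ i)]

end proximate

def IsSLKKMColoring {d : ℕ} {C : Type*} (Λ : Set (Fin d → ℝ)) (χ : (Fin d → ℝ) → C) : Prop :=
  ∀ x ∈ Λ, ∀ y ∈ Λ, dist x y = 1 → χ x ≠ χ y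

section coloring

variable {d : ℕ} {C : Type*} {χ : (Fin d → ℝ) → C}

theorem IsSLKKMColoring.ne_of_apply_eq_one_of_apply_eq_zero {Λ : Set (Fin d → ℝ)}
    (hχ : IsSLKKMColoring Λ χ) (hΛ : Λ ⊆ Icc 0 1) {y y' : Fin d → ℝ} (hy : y ∈ Λ) (hy' : y' ∈ Λ)
    {i : Fin d} (h₁ : y i = 1) (h₀ : y' i = 0) : χ y ≠ χ y' :=
  hχ y hy y' hy' (dist_eq_one_of_apply_eq_one_of_apply_eq_zero (hΛ hy) (hΛ hy') h₁ h₀)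

variable (Y : Finset (Fin d → ℝ)) (χ) (a r : ℝ)

def colorRegion (c : C) : Set (Fin d → ℝ) :=
  Icc (fun _ => -a) (fun _ => 1 + a) ∩
    {x | ∃ y ∈ Y, χ y = c ∧ y ∈ cubeFace x ∧ dist (clampCube x) y ≤ r}

theorem measurableSet_colorRegion (c : C) : MeasurableSet (colorRegion χ Y a r c) := by
  have h : {x | ∃ y ∈ Y, χ y = c ∧ y ∈ cubeFace x ∧ dist (clampCube x) y ≤ r} =
      ⋃ y ∈ Y, {x | χ y = c} ∩ ({x | y ∈ cubeFace x} ∩ {x | dist (clampCube x) y ≤ r}) := by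
    ext; simp [and_left_comm]
  refine measurableSet_Icc.inter (h ▸ Finset.measurableSet_biUnion Y fun y _ => ?_)
  exact (MeasurableSet.const _).inter ((measurableSet_setOf_mem_cubeFace y).inter
    (isClosed_le (continuous_clampCube.dist continuous_const) continuous_const).measurableSet)

variable {Y χ a r}

theorem Icc_subset_iUnion_colorRegion (hprox : IsProximate d r Y) :
    Icc (fun _ => -a) (fun _ => 1 + a) ⊆ ⋃ y ∈ Y, colorRegion χ Y a r (χ y) := by
  intro x hx
  obtain ⟨y, ⟨hyx, hyY⟩, hxy⟩ := hprox _ (isFace_cubeFace x) _ (clampCube_mem_cubeFace x)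
  exact mem_biUnion hyY ⟨hx, y, hyY, rfl, hyx, hxy⟩

theorem exists_corner_colorRegion (hYcube : (Y : Set (Fin d → ℝ)) ⊆ Icc 0 1)
    (hχ : IsSLKKMColoring Y χ) (c : C) :
    ∃ w : Fin d → ℝ, ∀ x ∈ colorRegion χ Y a r c, ∀ i,
      (w i = -a ∧ x i ∈ Icc (-a) 1) ∨ (w i = 1 + a ∧ x i ∈ Icc 0 (1 + a)) := by
  classical
  refine ⟨fun i => if ∃ x ∈ colorRegion χ Y a r c, x i < 0 then -a else 1 + a,
    fun x ⟨hxQ, y, hyY, hyc, hyx, hxy⟩ i => ?_⟩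
  dsimp only
  split_ifs with h
  · obtain ⟨x', ⟨-, y', hy'Y, hy'c, hy'x', -⟩, hx'i⟩ := h
    refine Or.inl ⟨rfl, hxQ.1 i, not_lt.1 fun hxi => ?_⟩
    exact hχ.ne_of_apply_eq_one_of_apply_eq_zero hYcube hyY hy'Y
      (apply_eq_one_of_mem_cubeFace hyx hxi) (apply_eq_zero_of_mem_cubeFace hy'x' hx'i)
      (hyc.trans hy'c.symm)
  · exact Or.inr ⟨rfl, not_lt.1 fun hxi => h ⟨x, ⟨hxQ, y, hyY, hyc, hyx, hxy⟩, hxi⟩,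
      hxQ.2 i⟩

end coloring

theorem one_add_div_one_add_mem_Icc {u : ℝ} (hu : -1 / 2 ≤ u) : 1 + u / (1 + u) ∈ Icc 0 2 := by
  have hu₁ : 0 < 1 + u := by linarith
  have h₀ : -1 ≤ u / (1 + u) := by rw [le_div_iff₀ hu₁]; linarith
  have h₁ : u / (1 + u) ≤ 1 := by rw [div_le_one hu₁]; linarith
  constructor <;> linarith

theorem ceil_one_add_div_one_add_pow_le_two_pow {u : ℝ} (hu : -1 / 2 ≤ u) (d : ℕ) :
    ⌈(1 + u / (1 + u)) ^ d⌉₊ ≤ 2 ^ d := by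
  have h := one_add_div_one_add_mem_Icc hu
  exact Nat.ceil_le.2 (by exact_mod_cast pow_le_pow_left₀ h.1 h.2 d)

theorem ceil_one_add_div_one_add_pow_le_one {u : ℝ} (hu : -1 / 2 ≤ u) (hu₀ : u ≤ 0) (d : ℕ) :
    ⌈(1 + u / (1 + u)) ^ d⌉₊ ≤ 1 := by
  have h₁ : 1 + u / (1 + u) ≤ 1 := by
    have := div_nonpos_of_nonpos_of_nonneg hu₀ (by linarith : (0 : ℝ) ≤ 1 + u)
    linarith
  exact Nat.ceil_le.2 (by exact_mod_cast pow_le_one₀ (one_add_div_one_add_mem_Icc hu).1 h₁)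

section sperner

variable {d : ℕ} {ρ : ℝ} {Λ : Set (Fin d → ℝ)} {C : Type*} {χ : (Fin d → ℝ) → C}

theorem IsProximate.exists_lt_encard_image_inter_closedBall {Y : Finset (Fin d → ℝ)} {r : ℝ}
    (hprox : IsProximate d r Y) (hYcube : (Y : Set (Fin d → ℝ)) ⊆ Icc 0 1)
    (hχ : IsSLKKMColoring Y χ) {a : ℝ} (ha : 0 < a) {k : ℕ} (hk : k < (1 + a / (1 + a)) ^ d) :
    ∃ p ∈ Icc 0 1, (k : ℕ∞) < (χ '' (Y ∩ closedBall p (a + r))).encard := by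
  classical
  set β := 1 + a / (1 + a)
  have hβ : β * (1 + a) = 1 + 2 * a := by simp only [β]; field_simp; ring
  set Q : Set (Fin d → ℝ) := Icc (fun _ => -a) (fun _ => 1 + a)
  have hQ₀ : volume Q ≠ 0 := by
    simp only [Q, Real.volume_Icc_pi, Finset.prod_ne_zero_iff, ne_eq, ENNReal.ofReal_eq_zero]
    intros; linarith
  choose w hw using exists_corner_colorRegion (a := a) (r := r) hYcube hχ
  have hmaps (c : C) : AffineMap.homothety (w c) β '' colorRegion χ Y a r c ⊆ Q := by
    rintro _ ⟨x, hx, rfl⟩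
    exact (homothety_mem_Icc_and_dist_clampCube_le ha hβ (hw c x hx)).1
  obtain ⟨z, hz⟩ := volume.exists_lt_card_filter_mem_image_homothety hQ₀
    isCompact_Icc.measure_lt_top.ne (K := Y.image χ)
    (fun c _ => measurableSet_colorRegion χ Y a r c)
    ((Icc_subset_iUnion_colorRegion hprox).trans_eq Finset.set_biUnion_finset_image.symm)
    w (by positivity) (fun c _ => hmaps c) (k := k) (by rwa [Module.finrank_fin_fun])
  refine ⟨clampCube z, clampCube_mem_Icc z, (Nat.cast_lt.2 hz).trans_le ?_⟩
  rw [← Set.encard_coe_eq_coe_finsetCard]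
  refine Set.encard_le_encard fun c hc => ?_
  obtain ⟨-, x, hx, rfl⟩ := Finset.mem_filter.1 hc
  obtain ⟨-, y, hyY, rfl, -, hxy⟩ := id hx
  refine ⟨y, ⟨hyY, mem_closedBall'.2 ?_⟩, rfl⟩
  calc dist (clampCube (AffineMap.homothety (w (χ y)) β x)) y
      ≤ dist (AffineMap.homothety (w (χ y)) β x) y := dist_clampCube_le _ (hYcube hyY)
    _ ≤ dist (AffineMap.homothety (w (χ y)) β x) (clampCube x) + dist (clampCube x) y :=
        dist_triangle _ _ _
    _ ≤ a + r := add_le_add (homothety_mem_Icc_and_dist_clampCube_le ha hβ (hw _ x hx)).2 hxy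

theorem IsProximate.ceil_le_encard_image_inter_ball (hΛ : Λ ⊆ Icc 0 1)
    (hprox : IsProximate d ρ Λ) (hχ : IsSLKKMColoring Λ χ) {ε : ℝ} (hρε : ρ < ε) :
    ∃ p ∈ Icc 0 1,
      (⌈(1 + (ε - ρ) / (1 + (ε - ρ))) ^ d⌉₊ : ℕ∞) ≤ (χ '' (Λ ∩ ball p ε)).encard := by
  set u := ε - ρ
  have hu : 0 < u := sub_pos.2 hρε
  set m := ⌈(1 + u / (1 + u)) ^ d⌉₊
  have hu₁ : 0 < 1 + u := by linarith
  have hpos : 0 < (1 + u / (1 + u)) ^ d := pow_pos (add_pos one_pos (div_pos hu hu₁)) d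
  have hm₁ : 1 ≤ m := Nat.one_le_ceil_iff.2 hpos
  have hm : ((m - 1 : ℕ) : ℝ) < (1 + u / (1 + u)) ^ d := by
    have := Nat.ceil_lt_add_one hpos.le
    rw [Nat.cast_sub hm₁]
    push_cast; linarith
  have hcont : ContinuousAt (fun a : ℝ => (1 + a / (1 + a)) ^ d) u :=
    ((continuousAt_const.add (continuousAt_id.div (continuousAt_const.add continuousAt_id)
      hu₁.ne')).pow d)
  obtain ⟨a, hma, ha₀, hau⟩ :=
    ((hcont.eventually_const_lt hm).filter_mono nhdsWithin_le_nhds |>.and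
      (Ioo_mem_nhdsLT hu)).exists
  obtain ⟨Y, hYΛ, hYprox⟩ :=
    hprox.exists_finset_subset_isProximate (r := ρ + (u - a) / 2) (by linarith)
  obtain ⟨p, hp, hpY⟩ := hYprox.exists_lt_encard_image_inter_closedBall (hYΛ.trans hΛ)
    (fun x hx y hy => hχ x (hYΛ hx) y (hYΛ hy)) ha₀ hma
  refine ⟨p, hp, ?_⟩
  calc (m : ℕ∞) = ((m - 1 : ℕ) : ℕ∞) + 1 := by
        rw [← Nat.cast_add_one, Nat.sub_add_cancel hm₁]
    _ ≤ (χ '' (Y ∩ closedBall p (a + (ρ + (u - a) / 2)))).encard := Order.add_one_le_of_lt hpY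
    _ ≤ (χ '' (Λ ∩ ball p ε)).encard := by
        refine Set.encard_le_encard (image_mono (inter_subset_inter hYΛ ?_))
        exact closedBall_subset_ball (by linarith)

theorem IsProximate.two_pow_le_encard_image_inter_ball (hΛ : Λ ⊆ Icc 0 1)
    (hprox : IsProximate d ρ Λ) (hχ : IsSLKKMColoring Λ χ) {ε : ℝ} (hε : 1 / 2 < ε) :
    (2 ^ d : ℕ∞) ≤ (χ '' (Λ ∩ ball (fun _ => 1 / 2) ε)).encard := by
  set v : (Fin d → Bool) → Fin d → ℝ := fun b i => if b i then 1 else 0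
  have hvΛ (b : Fin d → Bool) : v b ∈ Λ :=
    hprox.mem_of_forall_eq_zero_or_one fun i => by by_cases h : b i <;> simp [v, h]
  have hinj : Function.Injective (χ ∘ v) := by
    intro b b' h
    by_contra hne
    obtain ⟨i, hi⟩ := Function.ne_iff.1 hne
    cases hb : b i <;> cases hb' : b' i <;> simp only [hb, hb', ne_eq, not_true] at hi
    · exact hχ.ne_of_apply_eq_one_of_apply_eq_zero hΛ (hvΛ b') (hvΛ b) (i := i)
        (by simp [v, hb']) (by simp [v, hb]) h.symm
    · exact hχ.ne_of_apply_eq_one_of_apply_eq_zero hΛ (hvΛ b) (hvΛ b') (i := i)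
        (by simp [v, hb]) (by simp [v, hb']) h
  calc (2 ^ d : ℕ∞) = (univ : Set (Fin d → Bool)).encard := by simp [encard_univ]
    _ = (χ ∘ v '' univ).encard := hinj.injOn.encard_image.symm
    _ ≤ _ := by
        refine encard_le_encard ?_
        rintro _ ⟨b, -, rfl⟩
        refine ⟨v b, ⟨hvΛ b, mem_ball.2 (lt_of_le_of_lt ?_ hε)⟩, rfl⟩
        refine (dist_pi_le_iff (by norm_num)).2 fun i => ?_
        by_cases h : b i <;> norm_num [v, h, Real.dist_eq, abs_of_pos]

end sperner

theorem neighborhood_sperner_general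
    (d : ℕ) (ρ : ℝ)
    (Λ : Set (Fin d → ℝ)) (hΛ : Λ ⊆ Set.Icc 0 1) (hprox : IsProximate d ρ Λ)
    (C : Type*) (χ : (Fin d → ℝ) → C)
    (hχ : ∀ x ∈ Λ, ∀ y ∈ Λ, dist x y = 1 → χ x ≠ χ y)
    (ε : ℝ) (hε : 0 < ε) :
    ∃ p ∈ Set.Icc (0 : Fin d → ℝ) 1,
      (⌈(1 + (ε - min ρ (1/2)) / (1 + (ε - min ρ (1/2)))) ^ d⌉₊ : ℕ∞) ≤
        {c : C | (Λ ∩ χ ⁻¹' {c} ∩ Metric.ball p ε).Nonempty}.encard := by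
  have hu : -1 / 2 ≤ ε - min ρ (1 / 2) := by linarith [min_le_right ρ (1 / 2)]
  simp only [setOf_nonempty_inter_preimage_singleton_inter]
  rcases lt_or_ge (1 / 2) ε with hε₂ | hε₂
  · refine ⟨fun _ => 1 / 2, ⟨fun _ => by norm_num, fun _ => by norm_num⟩, ?_⟩
    exact le_trans (by exact_mod_cast ceil_one_add_div_one_add_pow_le_two_pow hu d)
      (hprox.two_pow_le_encard_image_inter_ball hΛ hχ hε₂)
  rcases lt_or_ge ρ ε with hρε | hερ
  · rw [min_eq_left (by linarith : ρ ≤ 1 / 2)]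
    exact hprox.ceil_le_encard_image_inter_ball hΛ hχ hρε
  · have h0 : (0 : Fin d → ℝ) ∈ Λ := hprox.mem_of_forall_eq_zero_or_one fun _ => Or.inl rfl
    refine ⟨0, ⟨le_rfl, zero_le_one⟩, le_trans ?_
      (one_le_encard_iff_nonempty.2 ⟨χ 0, 0, ⟨h0, mem_ball_self hε⟩, rfl⟩)⟩
    exact_mod_cast ceil_one_add_div_one_add_pow_le_one hu (sub_nonpos.2 (le_min hερ hε₂)) d

/-- **Neighborhood Sperner Lemma.** If `Λ ⊆ [0,1]^d` is `ρ`-proximate and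
`χ` is an SLKKM coloring of `Λ`, then with `ρ' = min(ρ, 1/2)`, for any `ε > 0` there is a
point `p` of the cube whose open `ℓ∞` `ε`-ball contains points of `Λ` of at least
`⌈(1 + (ε−ρ')/(1+(ε−ρ')))^d⌉` different colors. -/
theorem neighborhood_sperner
    (d : ℕ) (hd : 1 ≤ d) (ρ : ℝ) (hρ : 0 ≤ ρ)
    (Λ : Set (Fin d → ℝ)) (hΛ : Λ ⊆ Set.Icc 0 1) (hprox : IsProximate d ρ Λ)
    (C : Type*) (χ : (Fin d → ℝ) → C)
    (hχ : ∀ x ∈ Λ, ∀ y ∈ Λ, dist x y = 1 → χ x ≠ χ y)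
    (ε : ℝ) (hε : 0 < ε) :
    ∃ p ∈ Set.Icc (0 : Fin d → ℝ) 1,
      (⌈(1 + (ε - min ρ (1/2)) / (1 + (ε - min ρ (1/2)))) ^ d⌉₊ : ℕ∞) ≤
        {c : C | (Λ ∩ χ ⁻¹' {c} ∩ Metric.ball p ε).Nonempty}.encard :=
  neighborhood_sperner_general d ρ Λ hΛ hprox C χ hχ ε hε
end

section
/- For every dimension d ≥ 1 and every SLKKM coloring χ : [0,1]^d → C whose range is finite, there exists a point p ∈ [0,1]^d belonging to the closures of at least d+1 color sets, i.e. |{c ∈ C : p ∈ closure(χ⁻¹(c))}| ≥ d + 1. -/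
/-!
Subdivide the cube into `n^d` small cubes, each cut into the `d!` simplices of Kuhn's
triangulation, and give a grid point `x` the label of some coordinate `i` such that the colour
of `x` does not occur on the face `y_i = 0`, or the label `d` if there is no such `i`. A point
with `x_i = 0` never gets label `i`, and since opposite faces share no colour a point with some
`x_i = 1` never gets label `d`. This is a Sperner labelling, so by Sperner's lemma (the parity
count of doors, with induction on the dimension) some simplex carries all `d + 1` labels, hence
`d + 1` distinct colours, on vertices within `ℓ∞`-distance `1 / n` of each other.

Because only finitely many colours occur, every point `p` has a neighbourhood all of whose points
of the cube have a colour whose class has `p` in its closure. Taking `1 / n` below a Lebesgue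
number of this cover puts a whole rainbow simplex into one such neighbourhood.
-/

open Finset Function Equiv

namespace KKMLebesgue

section DoorCount

variable {α β : Type*} [DecidableEq α] [DecidableEq β] {A : Finset α} {f : α → β} {F : Finset β}

theorem image_erase_eq_image_of_map_eq {a b : α} (hb : b ∈ A) (hba : b ≠ a) (h : f b = f a) :
    (A.erase a).image f = A.image f := by
  refine (image_subset_image (erase_subset a A)).antisymm fun v hv => ?_
  obtain ⟨c, hc, rfl⟩ := mem_image.1 hv
  by_cases hca : c = a
  · subst hca
    rw [← h]
    exact mem_image_of_mem f (mem_erase.2 ⟨hba, hb⟩)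
  · exact mem_image_of_mem f (mem_erase.2 ⟨hca, hc⟩)

theorem card_filter_image_erase_eq_one {t : β} (ht : t ∉ F) (hA : #A = #F + 1)
    (hf : A.image f = insert t F) : #{a ∈ A | (A.erase a).image f = F} = 1 := by
  have hinj : Set.InjOn f A := injOn_of_card_image_eq (by rw [hf, card_insert_of_notMem ht, hA])
  obtain ⟨a₀, ha₀, hfa₀⟩ := mem_image.1 (hf ▸ mem_insert_self t F)
  have himage : ∀ a ∈ A, (A.erase a).image f = (insert t F).erase (f a) := fun a ha => by
    rw [← hf, ← coe_inj, coe_image, coe_erase, coe_erase, coe_image, hinj.image_sdiff_subset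
      (Set.singleton_subset_iff.2 ha), Set.image_singleton]
  rw [card_eq_one]
  refine ⟨a₀, eq_singleton_iff_unique_mem.2 ⟨mem_filter.2 ⟨ha₀, ?_⟩, fun a ha => ?_⟩⟩
  · rw [himage a₀ ha₀, hfa₀, erase_insert ht]
  · obtain ⟨ha, hdoor⟩ := mem_filter.1 ha
    have hfa : f a ∉ F := fun h => by
      rw [← hdoor, himage a ha] at h
      simp at h
    have hfat : f a = t := (mem_insert.1 (hf ▸ mem_image_of_mem f ha)).resolve_right hfa
    exact hinj ha ha₀ (hfat.trans hfa₀.symm)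

theorem card_filter_image_erase_eq_two (hA : #A = #F + 1) (hf : A.image f = F) :
    #{a ∈ A | (A.erase a).image f = F} = 2 := by
  obtain ⟨a, ha, b, hb, hab, hfab⟩ := exists_ne_map_eq_of_card_lt_of_maps_to (by omega : #F < #A)
    fun x hx => by rw [mem_coe, ← hf]; exact mem_image_of_mem f hx
  suffices {a' ∈ A | (A.erase a').image f = F} = {a, b} by rw [this, card_pair hab]
  ext k
  simp only [mem_filter, mem_insert, mem_singleton]
  constructor
  · rintro ⟨hk, hdoor⟩
    by_contra! hkab
    have hinj : Set.InjOn f (A.erase k) :=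
      injOn_of_card_image_eq (by rw [hdoor, card_erase_of_mem hk]; omega)
    exact hab (hinj (mem_erase.2 ⟨hkab.1.symm, ha⟩) (mem_erase.2 ⟨hkab.2.symm, hb⟩) hfab)
  · rintro (rfl | rfl)
    · exact ⟨ha, (image_erase_eq_image_of_map_eq hb hab.symm hfab.symm).trans hf⟩
    · exact ⟨hb, (image_erase_eq_image_of_map_eq ha hab hfab).trans hf⟩

theorem card_filter_image_erase_modTwo {t : β} (ht : t ∉ F) (hA : #A = #F + 1)
    (hf : ∀ a ∈ A, f a ∈ insert t F) :
    (#{a ∈ A | (A.erase a).image f = F} : ZMod 2) = if A.image f = insert t F then 1 else 0 := by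
  split_ifs with hfull
  · rw [card_filter_image_erase_eq_one ht hA hfull, Nat.cast_one]
  by_cases hF : A.image f = F
  · rw [card_filter_image_erase_eq_two hA hF]
    rfl
  rw [filter_false_of_mem, card_empty, Nat.cast_zero]
  intro a ha hdoor
  have himage : A.image f = insert (f a) F := by rw [← hdoor, ← image_insert, insert_erase ha]
  rcases mem_insert.1 (hf a ha) with h | h
  · exact hfull (h ▸ himage)
  · exact hF (himage.trans (insert_eq_of_mem h))

end DoorCount

theorem erase_range_add_one (m : ℕ) : (range (m + 1)).erase m = range m := by
  rw [range_add_one, erase_insert notMem_range_self]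

section Kuhn

variable {d n : ℕ}

abbrev KuhnSimplex (d : ℕ) := (Fin d → ℕ) × Perm (Fin d)

/-- The simplex `(b, π)` of the cell `b + [0, 1]^d` has the vertices
`b, b + e_{π 0}, b + e_{π 0} + e_{π 1}, …`; the `k`-th one is `b` plus the `e_i` with
`π⁻¹ i < k`. -/
def kuhnVertex (b : Fin d → ℕ) (π : Perm (Fin d)) (k : ℕ) (i : Fin d) : ℕ :=
  b i + if (π.symm i : ℕ) < k then 1 else 0

def simplices (d n : ℕ) : Finset (KuhnSimplex d) :=
  Fintype.piFinset (fun _ => range n) ×ˢ univ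

theorem mem_simplices {s : KuhnSimplex d} : s ∈ simplices d n ↔ ∀ i, s.1 i < n := by
  simp [simplices]

theorem kuhnVertex_le {b : Fin d → ℕ} (hb : ∀ i, b i < n) (π : Perm (Fin d)) (k : ℕ)
    (i : Fin d) : kuhnVertex b π k i ≤ n := by
  have := hb i
  unfold kuhnVertex
  split <;> omega

theorem kuhnVertex_le_add_one (b : Fin d → ℕ) (π : Perm (Fin d)) (k k' : ℕ) (i : Fin d) :
    kuhnVertex b π k i ≤ kuhnVertex b π k' i + 1 := by
  unfold kuhnVertex
  split_ifs <;> omega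

def labels (lab : (Fin d → ℕ) → ℕ) (s : KuhnSimplex d) : Finset ℕ :=
  (range (d + 1)).image fun k => lab (kuhnVertex s.1 s.2 k)

def facetLabels (lab : (Fin d → ℕ) → ℕ) (s : KuhnSimplex d) (k : ℕ) : Finset ℕ :=
  ((range (d + 1)).erase k).image fun j => lab (kuhnVertex s.1 s.2 j)

def rainbows (d n : ℕ) (lab : (Fin d → ℕ) → ℕ) : Finset (KuhnSimplex d) :=
  {s ∈ simplices d n | labels lab s = range (d + 1)}

theorem mem_facetLabels {lab : (Fin d → ℕ) → ℕ} {s : KuhnSimplex d} {k v : ℕ} :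
    v ∈ facetLabels lab s k ↔ ∃ j ≤ d, j ≠ k ∧ lab (kuhnVertex s.1 s.2 j) = v := by
  simp only [facetLabels, mem_image, mem_erase, mem_range, Nat.lt_succ_iff]
  exact ⟨fun ⟨j, ⟨hjk, hj⟩, h⟩ => ⟨j, hj, hjk, h⟩, fun ⟨j, hj, hjk, h⟩ => ⟨j, ⟨hjk, hj⟩, h⟩⟩

theorem injOn_of_mem_rainbows {lab : (Fin d → ℕ) → ℕ} {s : KuhnSimplex d}
    (hs : s ∈ rainbows d n lab) :
    Set.InjOn (fun k => lab (kuhnVertex s.1 s.2 k)) (range (d + 1)) :=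
  injOn_of_card_image_eq (by rw [← labels, (mem_filter.1 hs).2])

structure IsSpernerLabeling (n : ℕ) (lab : (Fin d → ℕ) → ℕ) : Prop where
  le : ∀ x, (∀ i, x i ≤ n) → lab x ≤ d
  ne_of_eq_zero : ∀ x, (∀ i, x i ≤ n) → ∀ i : Fin d, x i = 0 → lab x ≠ i
  ne_of_eq_top : ∀ x, (∀ i, x i ≤ n) → ∀ i : Fin d, x i = n → lab x ≠ d

theorem kuhnVertex_mul_swap (b : Fin d → ℕ) (π : Perm (Fin d)) {a a' : Fin d}
    (ha : (a' : ℕ) = a + 1) {j : ℕ} (hj : j ≠ a') :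
    kuhnVertex b (π * swap a a') j = kuhnVertex b π j := by
  have key : ∀ u : Fin d, ((swap a a' u : Fin d) : ℕ) < j ↔ (u : ℕ) < j := fun u => by
    rcases eq_or_ne u a with rfl | hua
    · rw [swap_apply_left]; omega
    rcases eq_or_ne u a' with rfl | hua'
    · rw [swap_apply_right]; omega
    rw [swap_apply_of_ne_of_ne hua hua']
  funext i
  simp only [kuhnVertex, Perm.mul_def, symm_trans_apply, symm_swap, key]

def push (s : KuhnSimplex (d + 1)) : KuhnSimplex (d + 1) :=
  (update s.1 (s.2 0) (s.1 (s.2 0) + 1), s.2 * finRotate (d + 1))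

def pull (s : KuhnSimplex (d + 1)) : KuhnSimplex (d + 1) :=
  (update s.1 (s.2 (Fin.last d)) (s.1 (s.2 (Fin.last d)) - 1), s.2 * (finRotate (d + 1))⁻¹)

theorem pull_push (s : KuhnSimplex (d + 1)) : pull (push s) = s := by
  simp [push, pull]

theorem push_pull {s : KuhnSimplex (d + 1)} (h : 1 ≤ s.1 (s.2 (Fin.last d))) :
    push (pull s) = s := by
  obtain ⟨b, π⟩ := s
  have hrot : (π * (finRotate (d + 1))⁻¹) 0 = π (Fin.last d) := by
    rw [Perm.mul_apply, Perm.inv_def, (symm_apply_eq _).2 finRotate_last.symm]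
  simp only [push, pull, hrot, update_self, update_idem, Nat.sub_add_cancel h, update_eq_self,
    inv_mul_cancel_right]

theorem kuhnVertex_push (s : KuhnSimplex (d + 1)) {j : ℕ} (hj : j ≤ d) :
    kuhnVertex (push s).1 (push s).2 j = kuhnVertex s.1 s.2 (j + 1) := by
  obtain ⟨b, π⟩ := s
  funext i
  obtain ⟨v, rfl⟩ := (π * finRotate (d + 1)).surjective i
  simp only [push, kuhnVertex, symm_apply_apply]
  simp only [Perm.mul_apply, symm_apply_apply]
  rcases eq_or_ne v (Fin.last d) with rfl | hv
  · simp only [finRotate_last, update_self, Fin.val_last, Fin.val_zero]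
    split_ifs <;> omega
  · have hrot : finRotate (d + 1) v ≠ 0 := by
      rwa [Ne, ← finRotate_last, (finRotate (d + 1)).injective.eq_iff]
    rw [update_of_ne (π.injective.ne hrot), coe_finRotate_of_ne_last hv]
    simp

/-- The other simplex containing the facet opposite vertex `k` of `s`, together with the index
of the vertex opposite that facet in it. -/
def across : KuhnSimplex (d + 1) × ℕ → KuhnSimplex (d + 1) × ℕ
  | (s, 0) => (push s, d + 1)
  | (s, k + 1) =>
    if h : k < d then ((s.1, s.2 * swap (Fin.castSucc ⟨k, h⟩) (Fin.succ ⟨k, h⟩)), k + 1)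
    else (pull s, 0)

theorem across_ne (p : KuhnSimplex (d + 1) × ℕ) : across p ≠ p := by
  obtain ⟨s, _ | k⟩ := p
  · simp [across]
  · by_cases h : k < d
    · simp [across, h, Prod.ext_iff, swap_eq_one_iff, Fin.ext_iff]
    · simp [across, h]

theorem across_across {p : KuhnSimplex (d + 1) × ℕ} (hp : p.2 ≤ d + 1)
    (hpull : p.2 = d + 1 → 1 ≤ p.1.1 (p.1.2 (Fin.last d))) : across (across p) = p := by
  obtain ⟨s, _ | k⟩ := p
  · simp [across, pull_push]
  · by_cases h : k < d
    · simp [across, h, mul_assoc]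
    · obtain rfl : k = d := by simp at hp; omega
      simp [across, push_pull (hpull rfl)]

theorem facetLabels_push (lab : (Fin (d + 1) → ℕ) → ℕ) (s : KuhnSimplex (d + 1)) :
    facetLabels lab (push s) (d + 1) = facetLabels lab s 0 := by
  have hbot : (range (d + 2)).erase 0 = (range (d + 1)).image (· + 1) := by
    ext a
    simp only [mem_erase, mem_range, mem_image]
    exact ⟨fun h => ⟨a - 1, by omega, by omega⟩, by rintro ⟨b, hb, rfl⟩; omega⟩
  rw [facetLabels, facetLabels, erase_range_add_one, hbot, image_image]
  exact image_congr fun j hj => by simp [kuhnVertex_push s (Nat.lt_succ_iff.1 (mem_range.1 hj))]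

theorem facetLabels_across (lab : (Fin (d + 1) → ℕ) → ℕ) {p : KuhnSimplex (d + 1) × ℕ}
    (hp : p.2 ≤ d + 1) (hpull : p.2 = d + 1 → 1 ≤ p.1.1 (p.1.2 (Fin.last d))) :
    facetLabels lab (across p).1 (across p).2 = facetLabels lab p.1 p.2 := by
  obtain ⟨s, _ | k⟩ := p
  · exact facetLabels_push lab s
  · by_cases h : k < d
    · simp only [across, h, dite_true]
      refine image_congr fun j hj => ?_
      rw [kuhnVertex_mul_swap _ _ (by simp) (by simpa using (mem_erase.1 hj).1)]
    · obtain rfl : k = d := by simp at hp; omega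
      simp only [across, h, dite_false]
      rw [← facetLabels_push, push_pull (hpull rfl)]

end Kuhn

section Doors

variable {d n : ℕ} {lab : (Fin (d + 1) → ℕ) → ℕ}

/-- Facets with all labels `0, …, d + 1` except `d`: the label `d` cannot occur on the face
`x_d = 0`, so the doors lying there are the rainbow simplices of that face once the label
`d + 1` is renamed `d`. -/
def doors (n : ℕ) (lab : (Fin (d + 1) → ℕ) → ℕ) : Finset (KuhnSimplex (d + 1) × ℕ) :=
  {p ∈ simplices (d + 1) n ×ˢ range (d + 2) | facetLabels lab p.1 p.2 = (range (d + 2)).erase d}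

theorem mem_doors {p : KuhnSimplex (d + 1) × ℕ} : p ∈ doors n lab ↔
    (∀ i, p.1.1 i < n) ∧ p.2 ≤ d + 1 ∧ facetLabels lab p.1 p.2 = (range (d + 2)).erase d := by
  simp [doors, mem_simplices, Nat.lt_succ_iff, and_assoc]

/-- The facet opposite the last vertex of `(b, π)` lies in the face `x_d = 0` exactly when
`π` fixes the last coordinate and `b_d = 0`. -/
def IsFaceDoor (p : KuhnSimplex (d + 1) × ℕ) : Prop :=
  p.2 = d + 1 ∧ p.1.2 (Fin.last d) = Fin.last d ∧ p.1.1 (Fin.last d) = 0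

instance : DecidablePred (IsFaceDoor (d := d)) := fun _ => by
  unfold IsFaceDoor
  infer_instance

theorem IsSpernerLabeling.card_doors_modTwo (hlab : IsSpernerLabeling n lab) :
    (#(doors n lab) : ZMod 2) = #(rainbows (d + 1) n lab) := by
  have hE : insert d ((range (d + 2)).erase d) = range (d + 2) := insert_erase (by simp)
  rw [doors, card_filter, sum_product, rainbows, card_filter, Nat.cast_sum, Nat.cast_sum]
  refine sum_congr rfl fun s hs => ?_
  rw [← card_filter, Nat.cast_ite, Nat.cast_one, Nat.cast_zero]
  have hvalues : ∀ k ∈ range (d + 2),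
      lab (kuhnVertex s.1 s.2 k) ∈ insert d ((range (d + 2)).erase d) := fun k _ => by
    rw [hE, mem_range, Nat.lt_succ_iff]
    exact hlab.le _ (kuhnVertex_le (mem_simplices.1 hs) _ _)
  have key := card_filter_image_erase_modTwo (by simp) (by simp) hvalues
  rw [hE] at key
  exact key

theorem IsSpernerLabeling.lt_of_mem_doors_zero (hlab : IsSpernerLabeling n lab)
    {s : KuhnSimplex (d + 1)} (hs : (s, 0) ∈ doors n lab) : s.1 (s.2 0) + 1 < n := by
  obtain ⟨hb, -, hlabels⟩ := mem_doors.1 hs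
  have hmem : d + 1 ∈ facetLabels lab s 0 := by
    rw [hlabels]
    simp
  obtain ⟨j, -, hj0, hlabj⟩ := mem_facetLabels.1 hmem
  by_contra! hn
  refine hlab.ne_of_eq_top _ (kuhnVertex_le hb _ _) (s.2 0) ?_ hlabj
  have := hb (s.2 0)
  dsimp only at this
  simp only [kuhnVertex, symm_apply_apply, Fin.val_zero, if_pos (Nat.pos_of_ne_zero hj0)]
  omega

theorem IsSpernerLabeling.one_le_of_mem_doors (hlab : IsSpernerLabeling n lab)
    {b : Fin (d + 1) → ℕ} {π : Perm (Fin (d + 1))} (hp : ((b, π), d + 1) ∈ doors n lab)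
    (hface : ¬IsFaceDoor ((b, π), d + 1)) : 1 ≤ b (π (Fin.last d)) := by
  obtain ⟨hb, -, hlabels⟩ := mem_doors.1 hp
  by_contra! h0
  have hlast : π (Fin.last d) ≠ Fin.last d := fun h => hface ⟨rfl, h, by
    show b (Fin.last d) = 0
    rw [← h]
    omega⟩
  have hmem : (π (Fin.last d) : ℕ) ∈ facetLabels lab (b, π) (d + 1) := by
    rw [hlabels]
    simp only [Ne, Fin.ext_iff, Fin.val_last] at hlast
    simp [hlast]
    omega
  obtain ⟨j, hj, hjd, hlabj⟩ := mem_facetLabels.1 hmem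
  replace hj : ¬d < j := by omega
  refine hlab.ne_of_eq_zero _ (kuhnVertex_le hb _ _) _ ?_ hlabj
  simp only [kuhnVertex, symm_apply_apply, Fin.val_last, if_neg hj]
  omega

theorem IsSpernerLabeling.across_mem_doors (hlab : IsSpernerLabeling n lab)
    {p : KuhnSimplex (d + 1) × ℕ} (hp : p ∈ doors n lab) (hface : ¬IsFaceDoor p) :
    across p ∈ doors n lab ∧ ¬IsFaceDoor (across p) := by
  obtain ⟨⟨b, π⟩, k⟩ := p
  have hpull : ((b, π), k).2 = d + 1 → 1 ≤ b (π (Fin.last d)) := by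
    rintro (rfl : k = d + 1)
    exact hlab.one_le_of_mem_doors hp hface
  obtain ⟨hb, hk, hlabels⟩ := mem_doors.1 hp
  have hlabels' := (facetLabels_across lab hk hpull).trans hlabels
  rcases k with _ | k
  · have hn := hlab.lt_of_mem_doors_zero hp
    refine ⟨mem_doors.2 ⟨fun i => ?_, le_rfl, hlabels'⟩, fun ⟨_, hlast, h0⟩ => ?_⟩
    · simp only [across, push, update_apply]
      split_ifs with hi
      · exact hn
      · exact hb i
    · simp only [across, push, Perm.mul_apply, finRotate_last] at hlast h0
      rw [hlast, update_self] at h0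
      omega
  by_cases h : k < d
  · simp only [across, h, dite_true] at hlabels' ⊢
    exact ⟨mem_doors.2 ⟨hb, hk, hlabels'⟩, fun ⟨hk', _⟩ => by omega⟩
  · simp only [across, h, dite_false] at hlabels' ⊢
    refine ⟨mem_doors.2 ⟨fun i => ?_, Nat.zero_le _, hlabels'⟩, fun ⟨hk', _⟩ => by omega⟩
    simp only [pull, update_apply]
    split_ifs
    · have := hb (π (Fin.last d))
      dsimp only at this
      omega
    · exact hb i

theorem IsSpernerLabeling.card_interior_doors_modTwo (hlab : IsSpernerLabeling n lab) :
    (#{p ∈ doors n lab | ¬IsFaceDoor p} : ZMod 2) = 0 := by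
  rw [card_eq_sum_ones, Nat.cast_sum, Nat.cast_one]
  refine sum_involution (fun p _ => across p) (fun _ _ => by decide) (fun p _ _ => across_ne p)
    (fun p hp => ?_) (fun p hp => ?_)
  · obtain ⟨hp, hface⟩ := mem_filter.1 hp
    exact mem_filter.2 (hlab.across_mem_doors hp hface)
  · obtain ⟨hp, hface⟩ := mem_filter.1 hp
    refine across_across (mem_doors.1 hp).2.1 fun htop => ?_
    obtain ⟨⟨b, π⟩, k⟩ := p
    obtain rfl : k = d + 1 := htop
    exact hlab.one_le_of_mem_doors hp hface

end Doors

section Face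

variable {d n : ℕ} {lab : (Fin (d + 1) → ℕ) → ℕ}

theorem IsSpernerLabeling.pos (hlab : IsSpernerLabeling n lab) : 0 < n := by
  by_contra! h0
  obtain rfl : n = 0 := by omega
  have hx : ∀ i, (0 : Fin (d + 1) → ℕ) i ≤ 0 := fun _ => le_rfl
  rcases Nat.lt_or_eq_of_le (hlab.le 0 hx) with hlt | heq
  · exact hlab.ne_of_eq_zero 0 hx ⟨lab 0, hlt⟩ rfl rfl
  · exact hlab.ne_of_eq_top 0 hx 0 rfl heq

theorem forall_snoc_zero_le_iff {y : Fin d → ℕ} {m : ℕ} :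
    (∀ i, (Fin.snoc y 0 : Fin (d + 1) → ℕ) i ≤ m) ↔ ∀ i, y i ≤ m := by
  simp [Fin.forall_fin_succ']

theorem forall_snoc_zero_lt_iff {y : Fin d → ℕ} {m : ℕ} (hm : 0 < m) :
    (∀ i, (Fin.snoc y 0 : Fin (d + 1) → ℕ) i < m) ↔ ∀ i, y i < m := by
  simp [Fin.forall_fin_succ', hm]

def faceLabeling (lab : (Fin (d + 1) → ℕ) → ℕ) (y : Fin d → ℕ) : ℕ :=
  if lab (Fin.snoc y 0) = d + 1 then d else lab (Fin.snoc y 0)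

theorem isSpernerLabeling_faceLabeling (hlab : IsSpernerLabeling n lab) :
    IsSpernerLabeling n (faceLabeling lab) where
  le y hy := by
    have := hlab.le _ (forall_snoc_zero_le_iff.2 hy)
    unfold faceLabeling
    split_ifs <;> omega
  ne_of_eq_zero y hy i hyi := by
    have := hlab.ne_of_eq_zero _ (forall_snoc_zero_le_iff.2 hy) i.castSucc (by simpa using hyi)
    unfold faceLabeling
    split_ifs
    · exact i.isLt.ne'
    · simpa using this
  ne_of_eq_top y hy i hyi := by
    have h1 := hlab.ne_of_eq_top _ (forall_snoc_zero_le_iff.2 hy) i.castSucc (by simpa using hyi)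
    have h2 := hlab.ne_of_eq_zero _ (forall_snoc_zero_le_iff.2 hy) (Fin.last d) (by simp)
    unfold faceLabeling
    rw [if_neg h1]
    simpa using h2

def liftPerm (σ : Perm (Fin d)) : Perm (Fin (d + 1)) :=
  finSuccEquivLast.symm.permCongr σ.optionCongr

@[simp]
theorem liftPerm_castSucc (σ : Perm (Fin d)) (i : Fin d) :
    liftPerm σ i.castSucc = (σ i).castSucc := by
  simp [liftPerm]

@[simp]
theorem liftPerm_last (σ : Perm (Fin d)) : liftPerm σ (Fin.last d) = Fin.last d := by
  simp [liftPerm]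

theorem liftPerm_symm (σ : Perm (Fin d)) : (liftPerm σ).symm = liftPerm σ.symm :=
  rfl

theorem liftPerm_injective : Injective (liftPerm (d := d)) :=
  finSuccEquivLast.symm.permCongr.injective.comp optionCongr_injective

theorem exists_liftPerm_eq {π : Perm (Fin (d + 1))} (hπ : π (Fin.last d) = Fin.last d) :
    ∃ σ, liftPerm σ = π := by
  set π' := finSuccEquivLast.symm.permCongr.symm π
  have hnone : π' none = none := by simp [π', hπ]
  have hπ' : optionCongr (removeNone π') = π' := by
    have := Perm.decomposeOption.symm_apply_apply π'
    rwa [Perm.decomposeOption_apply, hnone, Perm.decomposeOption_symm_apply, swap_self,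
      ← Perm.one_def, one_mul] at this
  exact ⟨removeNone π', by rw [liftPerm, hπ', apply_symm_apply]⟩

theorem kuhnVertex_snoc (c : Fin d → ℕ) (σ : Perm (Fin d)) {j : ℕ} (hj : j ≤ d) :
    kuhnVertex (Fin.snoc c 0) (liftPerm σ) j = Fin.snoc (kuhnVertex c σ j) 0 := by
  funext i
  induction i using Fin.lastCases with
  | last => simp [kuhnVertex, liftPerm_symm, hj]
  | cast i => simp [kuhnVertex, liftPerm_symm]

theorem image_relabel_eq_range_iff {S : Finset ℕ} (hS : S ⊆ (range (d + 2)).erase d) :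
    S.image (fun t => if t = d + 1 then d else t) = range (d + 1) ↔
      S = (range (d + 2)).erase d := by
  set r := fun t : ℕ => if t = d + 1 then d else t
  have hinj : Set.InjOn r ((range (d + 2)).erase d : Finset ℕ) := by
    intro x hx y hy h
    simp only [coe_erase, Set.mem_sdiff, coe_range, Set.mem_Iio, Set.mem_singleton_iff, r]
      at hx hy h
    split_ifs at h <;> omega
  have hE : ((range (d + 2)).erase d).image r = range (d + 1) := by
    ext a
    simp only [mem_image, mem_erase, mem_range, r]
    constructor
    · rintro ⟨t, ⟨htd, ht⟩, rfl⟩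
      split_ifs <;> omega
    · intro ha
      by_cases had : a = d
      · exact ⟨d + 1, ⟨by omega, by omega⟩, by simp [had]⟩
      · exact ⟨a, ⟨had, by omega⟩, by simp only [if_neg (show a ≠ d + 1 by omega)]⟩
  rw [← hE, ← coe_inj, coe_image, coe_image,
    hinj.image_eq_image_iff (coe_subset.2 hS) Set.Subset.rfl, coe_inj]

theorem labels_faceLabeling (c : Fin d → ℕ) (σ : Perm (Fin d)) :
    labels (faceLabeling lab) (c, σ) =
      (facetLabels lab (Fin.snoc c 0, liftPerm σ) (d + 1)).image
        fun t => if t = d + 1 then d else t := by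
  rw [facetLabels, erase_range_add_one, image_image, labels]
  refine image_congr fun j hj => ?_
  simp [faceLabeling, kuhnVertex_snoc c σ (Nat.lt_succ_iff.1 (mem_range.1 hj))]

theorem IsSpernerLabeling.mem_rainbows_faceLabeling_iff (hlab : IsSpernerLabeling n lab)
    {c : Fin d → ℕ} {σ : Perm (Fin d)} :
    (c, σ) ∈ rainbows d n (faceLabeling lab) ↔
      ((Fin.snoc c 0, liftPerm σ), d + 1) ∈ doors n lab := by
  rw [rainbows, mem_filter, mem_simplices, mem_doors]
  dsimp only
  rw [forall_snoc_zero_lt_iff hlab.pos]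
  simp only [le_refl, true_and]
  refine and_congr_right fun hc => ?_
  rw [labels_faceLabeling, image_relabel_eq_range_iff]
  intro v hv
  obtain ⟨j, hj, hjd, rfl⟩ := mem_facetLabels.1 hv
  have hx := kuhnVertex_le ((forall_snoc_zero_lt_iff hlab.pos).2 hc) (liftPerm σ) j
  have hne := hlab.ne_of_eq_zero _ hx (Fin.last d) (by rw [kuhnVertex_snoc c σ (by omega)]; simp)
  have hle := hlab.le _ hx
  simp only [Fin.val_last] at hne
  simp only [mem_erase, mem_range]
  omega

theorem IsSpernerLabeling.card_rainbows_faceLabeling (hlab : IsSpernerLabeling n lab) :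
    #(rainbows d n (faceLabeling lab)) = #{p ∈ doors n lab | IsFaceDoor p} := by
  refine card_bij (fun q _ => ((Fin.snoc q.1 0, liftPerm q.2), d + 1)) (fun q hq => ?_)
    (fun q₁ _ q₂ _ h => ?_) fun p hp => ?_
  · exact mem_filter.2 ⟨hlab.mem_rainbows_faceLabeling_iff.1 hq, rfl, liftPerm_last _, by simp⟩
  · simp only [Prod.mk.injEq, and_true] at h
    exact Prod.ext (by simpa using congrArg Fin.init h.1) (liftPerm_injective h.2)
  · obtain ⟨⟨b, π⟩, k⟩ := p
    obtain ⟨hp, rfl, hπ, hb0⟩ := mem_filter.1 hp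
    obtain ⟨σ, rfl⟩ := exists_liftPerm_eq hπ
    have hb : Fin.snoc (Fin.init b) 0 = b := by
      rw [← show b (Fin.last d) = 0 from hb0]
      exact Fin.snoc_init_self b
    refine ⟨(Fin.init b, σ), hlab.mem_rainbows_faceLabeling_iff.2 ?_, ?_⟩ <;> simp [hb, hp]

theorem IsSpernerLabeling.card_rainbows_succ_modTwo (hlab : IsSpernerLabeling n lab) :
    (#(rainbows (d + 1) n lab) : ZMod 2) = #(rainbows d n (faceLabeling lab)) := by
  rw [← hlab.card_doors_modTwo, ← card_filter_add_card_filter_not IsFaceDoor, Nat.cast_add,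
    hlab.card_interior_doors_modTwo, add_zero, hlab.card_rainbows_faceLabeling]

end Face

theorem IsSpernerLabeling.card_rainbows_modTwo {d n : ℕ} {lab : (Fin d → ℕ) → ℕ}
    (hlab : IsSpernerLabeling n lab) : (#(rainbows d n lab) : ZMod 2) = 1 := by
  induction d with
  | zero =>
    have hlabels : ∀ s, labels lab s = range 1 := fun s => by
      rw [labels, range_one, image_singleton, Nat.le_zero.1 (hlab.le _ fun i => i.elim0)]
    rw [rainbows, filter_true_of_mem fun s _ => hlabels s]
    simp [simplices]
  | succ d ih => rw [hlab.card_rainbows_succ_modTwo, ih (isSpernerLabeling_faceLabeling hlab)]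

theorem IsSpernerLabeling.rainbows_nonempty {d n : ℕ} {lab : (Fin d → ℕ) → ℕ}
    (hlab : IsSpernerLabeling n lab) : (rainbows d n lab).Nonempty := by
  rw [nonempty_iff_ne_empty]
  intro h
  simpa [h] using hlab.card_rainbows_modTwo

section Cube

variable {d : ℕ}

noncomputable def toCube (n : ℕ) (x : Fin d → ℕ) (i : Fin d) : ℝ := x i / n

theorem toCube_mem_Icc {n : ℕ} {x : Fin d → ℕ} (hx : ∀ i, x i ≤ n) :
    toCube n x ∈ Set.Icc (0 : Fin d → ℝ) 1 :=
  ⟨fun i => by simp only [toCube, Pi.zero_apply]; positivity,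
    fun i => div_le_one_of_le₀ (Nat.cast_le.2 (hx i)) (Nat.cast_nonneg n)⟩

theorem dist_toCube_le {n : ℕ} {x y : Fin d → ℕ} (h : ∀ i, x i ≤ y i + 1 ∧ y i ≤ x i + 1) :
    dist (toCube n x) (toCube n y) ≤ 1 / n := by
  refine (dist_pi_le_iff (by positivity)).2 fun i => ?_
  have h₁ : (x i : ℝ) ≤ y i + 1 := by exact_mod_cast (h i).1
  have h₂ : (y i : ℝ) ≤ x i + 1 := by exact_mod_cast (h i).2
  rw [toCube, toCube, Real.dist_eq, ← sub_div, abs_div, Nat.abs_cast]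
  exact div_le_div_of_nonneg_right (abs_sub_le_iff.2 ⟨by linarith, by linarith⟩) (Nat.cast_nonneg n)

theorem dist_eq_one_of_mem_Icc {x y : Fin d → ℝ} (hx : x ∈ Set.Icc 0 1) (hy : y ∈ Set.Icc 0 1)
    {i : Fin d} (hxi : x i = 1) (hyi : y i = 0) : dist x y = 1 := by
  refine le_antisymm ((dist_pi_le_iff zero_le_one).2 fun j => ?_) ?_
  · have hx₀ : 0 ≤ x j := hx.1 j
    have hx₁ : x j ≤ 1 := hx.2 j
    have hy₀ : 0 ≤ y j := hy.1 j
    have hy₁ : y j ≤ 1 := hy.2 j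
    rw [Real.dist_eq, abs_le]
    constructor <;> linarith
  · calc (1 : ℝ) = dist (x i) (y i) := by simp [hxi, hyi]
      _ ≤ dist x y := dist_le_pi_dist x y i

variable {C : Type*} (χ : (Fin d → ℝ) → C)

def IsSLKKMColoring : Prop :=
  ∀ x ∈ Set.Icc (0 : Fin d → ℝ) 1, ∀ y ∈ Set.Icc (0 : Fin d → ℝ) 1, dist x y = 1 → χ x ≠ χ y

open scoped Classical in
noncomputable def kkmLabel (c : C) : ℕ :=
  if h : ∃ i : Fin d, ∀ y ∈ Set.Icc (0 : Fin d → ℝ) 1, y i = 0 → χ y ≠ c then h.choose else d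

theorem kkmLabel_le (c : C) : kkmLabel χ c ≤ d := by
  unfold kkmLabel
  split_ifs with h
  · exact h.choose.isLt.le
  · exact le_rfl

theorem kkmLabel_ne_of_eq_zero {y : Fin d → ℝ} (hy : y ∈ Set.Icc 0 1) {i : Fin d} (hyi : y i = 0) :
    kkmLabel χ (χ y) ≠ i := by
  unfold kkmLabel
  split_ifs with h
  · exact fun hi => h.choose_spec y hy (Fin.ext hi ▸ hyi) rfl
  · exact i.isLt.ne'

theorem kkmLabel_ne_of_eq_one (hχ : IsSLKKMColoring χ) {x : Fin d → ℝ} (hx : x ∈ Set.Icc 0 1)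
    {i : Fin d} (hxi : x i = 1) : kkmLabel χ (χ x) ≠ d := by
  have h : ∃ i : Fin d, ∀ y ∈ Set.Icc (0 : Fin d → ℝ) 1, y i = 0 → χ y ≠ χ x :=
    ⟨i, fun y hy hyi => (hχ x hx y hy (dist_eq_one_of_mem_Icc hx hy hxi hyi)).symm⟩
  rw [kkmLabel, dif_pos h]
  exact h.choose.isLt.ne

theorem isSpernerLabeling_kkmLabel (hχ : IsSLKKMColoring χ) {n : ℕ} (hn : 0 < n) :
    IsSpernerLabeling n fun x => kkmLabel χ (χ (toCube n x)) where
  le _ _ := kkmLabel_le χ _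
  ne_of_eq_zero _ hx _ hxi :=
    kkmLabel_ne_of_eq_zero χ (toCube_mem_Icc hx) (by simp [toCube, hxi])
  ne_of_eq_top _ hx i hxi :=
    kkmLabel_ne_of_eq_one χ hχ (toCube_mem_Icc hx) (i := i) (by simp [toCube, hxi, hn.ne'])

theorem exists_small_rainbow (hχ : IsSLKKMColoring χ) {n : ℕ} (hn : 0 < n) :
    ∃ w : Fin (d + 1) → Fin d → ℝ, (∀ m, w m ∈ Set.Icc 0 1) ∧ Injective (χ ∘ w) ∧
      ∀ m m', dist (w m) (w m') ≤ 1 / n := by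
  obtain ⟨⟨b, π⟩, hs⟩ := (isSpernerLabeling_kkmLabel χ hχ hn).rainbows_nonempty
  have hb := mem_simplices.1 (mem_filter.1 hs).1
  refine ⟨fun m => toCube n (kuhnVertex b π m), fun m => toCube_mem_Icc (kuhnVertex_le hb π m),
    fun m m' h => ?_, fun m m' => dist_toCube_le fun i =>
      ⟨kuhnVertex_le_add_one b π _ _ i, kuhnVertex_le_add_one b π _ _ i⟩⟩
  exact Fin.ext (injOn_of_mem_rainbows hs (mem_range.2 m.isLt) (mem_range.2 m'.isLt)
    (congrArg (kkmLabel χ) h))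

end Cube

section Limit

open Set Filter Topology Metric

variable {X C : Type*} {K : Set X} {χ : X → C}

theorem eventually_mem_closure_of_finite [TopologicalSpace X] (hfin : (χ '' K).Finite) (p : X) :
    ∀ᶠ x in 𝓝 p, x ∈ K → p ∈ closure (K ∩ χ ⁻¹' {χ x}) := by
  have hcolor : ∀ c ∈ χ '' K,
      ∀ᶠ x in 𝓝 p, p ∈ closure (K ∩ χ ⁻¹' {c}) ∨ x ∉ K ∩ χ ⁻¹' {c} := fun c _ => by
    by_cases hc : p ∈ closure (K ∩ χ ⁻¹' {c})
    · exact Eventually.of_forall fun _ => Or.inl hc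
    · rw [mem_closure_iff_frequently, not_frequently] at hc
      exact hc.mono fun _ => Or.inr
  filter_upwards [(eventually_all_finite hfin).2 hcolor] with x hx hxK
  exact (hx (χ x) (mem_image_of_mem χ hxK)).resolve_right (not_not.2 ⟨hxK, rfl⟩)

theorem exists_encard_le_of_small_rainbows [PseudoMetricSpace X] (hK : IsCompact K)
    (hfin : (χ '' K).Finite) {N : ℕ}
    (h : ∀ δ > 0, ∃ w : Fin (N + 1) → X, (∀ m, w m ∈ K) ∧ Injective (χ ∘ w) ∧
      ∀ m, dist (w m) (w 0) < δ) :
    ∃ p ∈ K, (N + 1 : ℕ∞) ≤ {c | p ∈ closure (K ∩ χ ⁻¹' {c})}.encard := by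
  obtain ⟨δ, hδ, hball⟩ := lebesgue_number_lemma_of_metric
    (c := fun p : K => interior {x | x ∈ K → (p : X) ∈ closure (K ∩ χ ⁻¹' {χ x})}) hK
    (fun _ => isOpen_interior) fun x hx => mem_iUnion.2
      ⟨⟨x, hx⟩, mem_interior_iff_mem_nhds.2 (eventually_mem_closure_of_finite hfin x)⟩
  obtain ⟨w, hwK, hinj, hw⟩ := h δ hδ
  obtain ⟨⟨p, hp⟩, hsub⟩ := hball (w 0) (hwK 0)
  refine ⟨p, hp, ?_⟩
  have hrange : range (χ ∘ w) ⊆ {c | p ∈ closure (K ∩ χ ⁻¹' {c})} := by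
    rintro _ ⟨m, rfl⟩
    exact interior_subset (hsub (mem_ball.2 (hw m))) (hwK m)
  calc (N + 1 : ℕ∞) = ENat.card (Fin (N + 1)) := by simp
    _ ≤ (range (χ ∘ w)).encard := hinj.encard_range
    _ ≤ _ := encard_le_encard hrange

end Limit

end KKMLebesgue

theorem kkm_lebesgue_general
    (d : ℕ) (C : Type*) (χ : (Fin d → ℝ) → C)
    (hfin : (χ '' Set.Icc (0 : Fin d → ℝ) 1).Finite)
    (hχ : ∀ x ∈ Set.Icc (0 : Fin d → ℝ) 1, ∀ y ∈ Set.Icc (0 : Fin d → ℝ) 1,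
      dist x y = 1 → χ x ≠ χ y) :
    ∃ p ∈ Set.Icc (0 : Fin d → ℝ) 1,
      (d + 1 : ℕ∞) ≤
        {c : C | p ∈ closure (Set.Icc (0 : Fin d → ℝ) 1 ∩ χ ⁻¹' {c})}.encard := by
  refine KKMLebesgue.exists_encard_le_of_small_rainbows isCompact_Icc hfin fun δ hδ => ?_
  obtain ⟨n, hn⟩ := exists_nat_one_div_lt hδ
  obtain ⟨w, hw, hinj, hdist⟩ := KKMLebesgue.exists_small_rainbow χ hχ n.succ_pos
  exact ⟨w, hw, hinj, fun m => (hdist m 0).trans_lt (by rwa [Nat.cast_succ])⟩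

/-- **KKM-Lebesgue Theorem.** Given a finite SLKKM coloring of `[0,1]^d` (finitely many
colors are used and no two points of the cube at `ℓ∞` distance `1` get the same color),
there is a point of the cube belonging to the closures of at least `d + 1` color sets. -/
theorem kkm_lebesgue
    (d : ℕ) (hd : 1 ≤ d) (C : Type*) (χ : (Fin d → ℝ) → C)
    (hfin : (χ '' Set.Icc (0 : Fin d → ℝ) 1).Finite)
    (hχ : ∀ x ∈ Set.Icc (0 : Fin d → ℝ) 1, ∀ y ∈ Set.Icc (0 : Fin d → ℝ) 1,
      dist x y = 1 → χ x ≠ χ y) :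
    ∃ p ∈ Set.Icc (0 : Fin d → ℝ) 1,
      (d + 1 : ℕ∞) ≤
        {c : C | p ∈ closure (Set.Icc (0 : Fin d → ℝ) 1 ∩ χ ⁻¹' {c})}.encard :=
  kkm_lebesgue_general d C χ hfin hχ
end
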